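/- arXiv:1309.1368 — 9 statements merged into one kernel-verified Lean document; each statement's English description precedes it below -/
import Mathlib

section
/- Let k be a field, A a k-algebra that is an integral domain, and φ : A → A[U] an exponential map (i.e., evaluating U at 0 gives the identity on A, and φ_V ∘ φ_U = φ_{V+U}). Then the ring of invariants A^φ = {a ∈ A | φ(a) = a} is factorially closed in A: if a, b ∈ A are nonzero and a·b ∈ A^φ, then a ∈ A^φ and b ∈ A^φ. -/
open Polynomial in
/-- `φ : A → A[U]` is an exponential map: evaluation of `U` at `0` is the identity,
and the coaction identity `φ_V φ_U = φ_{V+U}` holds. -/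
def IsExpMap {k A : Type*} [CommSemiring k] [CommRing A] [Algebra k A]
    (φ : A →ₐ[k] Polynomial A) : Prop :=
  (∀ a : A, (φ a).eval 0 = a) ∧
  (∀ a : A, (φ a).map φ.toRingHom =
      (φ a).eval₂ (C.comp (C : A →+* Polynomial A)) (X + C X))

open Polynomial in
/-- The ring of invariants of an exponential map. -/
def expInvariants {k A : Type*} [CommSemiring k] [CommRing A] [Algebra k A]
    (φ : A →ₐ[k] Polynomial A) : Set A := {a | φ a = C a}

open Polynomial in
theorem mem_expInvariants_of_dvd {k A : Type*} [CommSemiring k] [CommRing A] [NoZeroDivisors A]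
    [Algebra k A] {φ : A →ₐ[k] A[X]} (hφ₀ : ∀ a : A, (φ a).eval 0 = a) {a c : A} (hc : c ≠ 0)
    (hac : a ∣ c) (hcφ : c ∈ expInvariants φ) : a ∈ expInvariants φ := by
  have hdvd : φ a ∣ C c := by
    rw [← show φ c = C c from hcφ]
    exact map_dvd (φ : A →+* A[X]) hac
  have hdeg : (φ a).natDegree = 0 := by
    simpa using natDegree_le_of_dvd hdvd (C_ne_zero.mpr hc)
  show φ a = C a
  rw [eq_C_of_natDegree_eq_zero hdeg, coeff_zero_eq_eval_zero, hφ₀]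

open Polynomial in
theorem expInvariants_factorially_closed
    {k A : Type*} [Field k] [CommRing A] [IsDomain A] [Algebra k A]
    (φ : A →ₐ[k] Polynomial A) (hφ : IsExpMap φ)
    (a b : A) (ha : a ≠ 0) (hb : b ≠ 0) (hab : a * b ∈ expInvariants φ) :
    a ∈ expInvariants φ ∧ b ∈ expInvariants φ :=
  ⟨mem_expInvariants_of_dvd hφ.1 (mul_ne_zero ha hb) (dvd_mul_right a b) hab,
    mem_expInvariants_of_dvd hφ.1 (mul_ne_zero ha hb) (dvd_mul_left b a) hab⟩
end

section
/- Let k be a field, A a k-algebra that is an integral domain, and φ : A → A[U] an exponential map. Then the ring of invariants A^φ is algebraically closed in A: if a ∈ A is algebraic over A^φ (i.e., a root of a nonzero polynomial with coefficients in A^φ), then a ∈ A^φ. -/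
/-!
Applying `φ` to `p(a) = 0` and using that the coefficients of `p` are invariant gives
`p(φ a) = 0` in `A[U]`. Over a domain a nonzero polynomial can only vanish at a constant
polynomial, so `φ a` is constant, and `ε₀ ∘ φ = id` says that this constant is `a`.
-/

open Polynomial

theorem Polynomial.eval₂_eq_eval₂_of_forall_coeff {R S : Type*} [Semiring R] [Semiring S]
    {f g : R →+* S} {p : R[X]} (h : ∀ i, f (p.coeff i) = g (p.coeff i)) (x : S) :
    p.eval₂ f x = p.eval₂ g x := by
  simp only [eval₂_eq_sum, Polynomial.sum]
  exact Finset.sum_congr rfl fun i _ => by rw [h i]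

section ExpMap

variable {k A : Type*} [CommSemiring k] [CommRing A] [Algebra k A] {φ : A →ₐ[k] A[X]}

theorem map_eval_eq_comp_of_coeff_mem_expInvariants {p : A[X]}
    (hcoeff : ∀ i, p.coeff i ∈ expInvariants φ) (a : A) :
    φ (p.eval a) = p.comp (φ a) := by
  have hom_eval : φ (p.eval a) = p.eval₂ φ.toRingHom (φ a) := by
    simpa using hom_eval₂ p (RingHom.id A) φ.toRingHom a
  rw [hom_eval, comp]
  exact eval₂_eq_eval₂_of_forall_coeff hcoeff _

theorem IsExpMap.mem_expInvariants_of_eq_C (hφ : IsExpMap φ) {a c : A} (h : φ a = C c) :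
    a ∈ expInvariants φ := by
  have hc : c = a := by simpa [h] using hφ.1 a
  show φ a = C a
  rw [h, hc]

end ExpMap

open Polynomial in
theorem expInvariants_algebraically_closed
    {k A : Type*} [Field k] [CommRing A] [IsDomain A] [Algebra k A]
    (φ : A →ₐ[k] Polynomial A) (hφ : IsExpMap φ)
    (a : A) (p : Polynomial A) (hp : p ≠ 0)
    (hcoeff : ∀ i, p.coeff i ∈ expInvariants φ)
    (hroot : p.eval a = 0) :
    a ∈ expInvariants φ := by
  have hcomp : p.comp (φ a) = 0 := by
    rw [← map_eval_eq_comp_of_coeff_mem_expInvariants hcoeff, hroot, map_zero]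
  obtain hp0 | ⟨-, hconst⟩ := comp_eq_zero_iff.mp hcomp
  · exact absurd hp0 hp
  · exact hφ.mem_expInvariants_of_eq_C hconst
end

section
/- Let k be a field of characteristic p > 0 and let q be a prime different from p. Then f(Z,T) = Z^{p²} + T + T^{qp} is a line in k[Z,T], i.e., the quotient ring k[Z,T]/(f) is isomorphic as a k-algebra to a polynomial ring in one variable over k. -/
/-!
Write `ε = (-1)^q`. Modulo `f = Z^{p²} + T + T^{qp}`, the element `u = Z^p + T^q` satisfies
`u^p = -T` by additivity of Frobenius, and then `w = Z + ε u^q` satisfies `w^p = u` (using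
`ε^p = ε` and `ε² = 1`). Hence `T = -w^{p²}` and `Z = w - ε w^{qp}`, so `w` generates the
quotient, and `X ↦ (X - ε X^{qp}, -X^{p²})` is the inverse parametrization of the curve `f = 0`.
-/

namespace MvPolynomial

variable {R σ B : Type*} [CommRing R] [CommRing B] [Algebra R B] {f : MvPolynomial σ R}

noncomputable def liftQuotientSpanSingleton (φ : σ → B) (hf : aeval φ f = 0) :
    (MvPolynomial σ R ⧸ Ideal.span {f}) →ₐ[R] B :=
  Ideal.Quotient.liftₐ _ (aeval φ) fun a ha => by
    obtain ⟨b, rfl⟩ := Ideal.mem_span_singleton'.mp ha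
    rw [map_mul, hf, mul_zero]

@[simp]
theorem liftQuotientSpanSingleton_mk (φ : σ → B) (hf : aeval φ f = 0) (a : MvPolynomial σ R) :
    liftQuotientSpanSingleton φ hf (Ideal.Quotient.mk _ a) = aeval φ a :=
  rfl

theorem nontrivial_quotient_span_singleton_of_aeval_eq_zero [Nontrivial B] (φ : σ → B)
    (hf : aeval φ f = 0) : Nontrivial (MvPolynomial σ R ⧸ Ideal.span {f}) :=
  (liftQuotientSpanSingleton φ hf).toRingHom.domain_nontrivial

noncomputable def quotientSpanSingletonAlgEquivPolynomial (φ : σ → Polynomial R)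
    (g : MvPolynomial σ R) (hf : aeval φ f = 0) (hg : aeval φ g = Polynomial.X)
    (hX : ∀ i, Polynomial.aeval (Ideal.Quotient.mk (Ideal.span {f}) g) (φ i) =
      Ideal.Quotient.mk (Ideal.span {f}) (X i)) :
    (MvPolynomial σ R ⧸ Ideal.span {f}) ≃ₐ[R] Polynomial R :=
  AlgEquiv.ofAlgHom (liftQuotientSpanSingleton φ hf) (Polynomial.aeval (Ideal.Quotient.mk _ g))
    (Polynomial.algHom_ext <| by simpa using hg)
    (Ideal.Quotient.algHom_ext _ <| MvPolynomial.algHom_ext fun i => by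
      simpa using hX i)

end MvPolynomial

section Nagata

variable {A B : Type*} [CommRing A] [CommRing B] (p q : ℕ)

def nagataInverse (z t : A) : A := z + (-1) ^ q * (z ^ p + t ^ q) ^ q

theorem map_nagataInverse {F : Type*} [FunLike F A B] [RingHomClass F A B] (φ : F) (z t : A) :
    φ (nagataInverse p q z t) = nagataInverse p q (φ z) (φ t) := by
  simp [nagataInverse]

variable [Fact p.Prime] [CharP A p]

theorem neg_one_pow_mul_char_pow (n : ℕ) : (-1 : A) ^ (q * p ^ n) = (-1) ^ q := by
  rw [pow_mul', neg_one_pow_char_pow]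

theorem neg_one_pow_mul_char : (-1 : A) ^ (q * p) = (-1) ^ q := by
  rw [pow_mul', neg_one_pow_char]

theorem nagata_param_eq_zero (x : A) :
    (x - (-1) ^ q * x ^ (q * p)) ^ p ^ 2 + -x ^ p ^ 2 + (-x ^ p ^ 2) ^ (q * p) = 0 := by
  rw [sub_pow_char_pow, mul_pow, ← pow_mul (-1 : A), neg_one_pow_mul_char_pow,
    neg_pow (x ^ p ^ 2), neg_one_pow_mul_char]
  ring

theorem nagataInverse_param (x : A) :
    nagataInverse p q (x - (-1) ^ q * x ^ (q * p)) (-x ^ p ^ 2) = x := by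
  have hu : (x - (-1) ^ q * x ^ (q * p)) ^ p + (-x ^ p ^ 2) ^ q = x ^ p := by
    rw [sub_pow_char, mul_pow, ← pow_mul (-1 : A), neg_one_pow_mul_char, neg_pow (x ^ p ^ 2)]
    ring
  rw [nagataInverse, hu]
  ring

section Relation

variable {p q} {z t : A} (h : z ^ p ^ 2 + t + t ^ (q * p) = 0)
include h

theorem pow_char_nagataInverse : nagataInverse p q z t ^ p = z ^ p + t ^ q := by
  have hu : (z ^ p + t ^ q) ^ p = -t := by
    rw [add_pow_char, ← pow_mul, ← pow_mul, ← sq]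
    linear_combination h
  have hε : (-1 : A) ^ q * (-1) ^ q = 1 := by rw [← mul_pow, neg_one_mul, neg_neg, one_pow]
  rw [nagataInverse, add_pow_char, mul_pow, ← pow_mul (-1 : A), neg_one_pow_mul_char, ← pow_mul,
    mul_comm q p, pow_mul, hu, neg_pow]
  linear_combination t ^ q * hε

theorem nagataInverse_sub_eq :
    nagataInverse p q z t - (-1) ^ q * nagataInverse p q z t ^ (q * p) = z := by
  rw [pow_mul', pow_char_nagataInverse h, nagataInverse]
  ring

theorem neg_nagataInverse_pow_eq : -nagataInverse p q z t ^ p ^ 2 = t := by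
  rw [sq, pow_mul, pow_char_nagataInverse h, add_pow_char, ← pow_mul, ← pow_mul, ← sq]
  linear_combination -h

end Relation

end Nagata

open MvPolynomial in
theorem nagata_line_is_line_general
    {k : Type*} [Field k] (p q : ℕ) [hp : Fact p.Prime] (hchar : CharP k p) :
    Nonempty ((MvPolynomial (Fin 2) k ⧸
        Ideal.span {(X 0 : MvPolynomial (Fin 2) k) ^ (p ^ 2) + X 1 + X 1 ^ (q * p)})
      ≃ₐ[k] Polynomial k) := by
  set f : MvPolynomial (Fin 2) k := X 0 ^ (p ^ 2) + X 1 + X 1 ^ (q * p)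
  let φ : Fin 2 → Polynomial k :=
    ![Polynomial.X - (-1) ^ q * Polynomial.X ^ (q * p), -Polynomial.X ^ p ^ 2]
  have hf : aeval φ f = 0 := by
    simpa [f, φ] using nagata_param_eq_zero p q (Polynomial.X : Polynomial k)
  have hg : aeval φ (nagataInverse p q (X 0 : MvPolynomial (Fin 2) k) (X 1)) = Polynomial.X := by
    simpa [φ, map_nagataInverse] using nagataInverse_param p q (Polynomial.X : Polynomial k)
  have := nontrivial_quotient_span_singleton_of_aeval_eq_zero φ hf
  have := charP_of_injective_algebraMap
    (algebraMap k (MvPolynomial (Fin 2) k ⧸ Ideal.span {f})).injective p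
  have hrel := Ideal.Quotient.mk_singleton_self f
  simp only [f, map_add, map_pow] at hrel
  refine ⟨quotientSpanSingletonAlgEquivPolynomial φ _ hf hg fun i => ?_⟩
  fin_cases i
  · simpa [φ, map_nagataInverse] using nagataInverse_sub_eq hrel
  · simpa [φ, map_nagataInverse] using neg_nagataInverse_pow_eq hrel

open MvPolynomial in
/-- The Nagata polynomial `Z^{p²} + T + T^{qp}` is a line in `k[Z,T]` in
characteristic `p > 0`, for `q` a prime different from `p`. -/
theorem nagata_line_is_line
    {k : Type*} [Field k] (p q : ℕ) [hp : Fact p.Prime] (hchar : CharP k p)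
    (hq : q.Prime) (hqp : q ≠ p) :
    Nonempty ((MvPolynomial (Fin 2) k ⧸
        Ideal.span {(X 0 : MvPolynomial (Fin 2) k) ^ (p ^ 2) + X 1 + X 1 ^ (q * p)})
      ≃ₐ[k] Polynomial k) :=
  nagata_line_is_line_general p q (hp := hp) hchar
end

section
/- Let k be a field, m ≥ 1, r₁,…,r_m > 1 integers, and f(Z,T) ∈ k[Z,T] a line (i.e., k[Z,T]/(f) ≅ k[X]). Let A = k[X₁,…,X_m,Y,Z,T]/(X₁^{r₁}⋯X_m^{r_m}·Y − f(Z,T)). Then the polynomial ring A[W] in one variable over A is k-isomorphic to the polynomial ring in m+3 variables over k. -/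
/-!
Write `x = X₁^{r₁}⋯X_m^{r_m}`. Since `k[Z,T]/(f) ≅ k[u]`, there are `d ∈ k[u]²` and `h ∈ k[Z,T]`
with `f(d(u)) = 0`, `h(d(u)) = u` and `(Z,T) ≡ d(h) mod f`. In `A[W]` put `V = h + xW`; as
`f = xY` in `A`, we get `(Z,T) ≡ d(h) ≡ d(V) mod x`, say `(Z,T) = d(V) + x(Z',T')`.
Conversely, in the polynomial ring `k[X, V, Z', T']` the elements `(Z,T) := d(V) + x(Z',T')`
satisfy `f(Z,T) ≡ f(d(V)) = 0` and `h(Z,T) ≡ V mod x`, which produces `Y := f(Z,T)/x` and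
`W := (V - h(Z,T))/x`. The two substitutions are mutually inverse because `x` is a
non-zero-divisor on both sides: on `A` because no `Xⱼ` divides `xY - f`, as `f ≠ 0`
(`k[Z,T]` has Krull dimension 2, the line `k[u]` only 1).
-/

open MvPolynomial
open scoped Polynomial nonZeroDivisors

theorem MvPolynomial.dvd_aeval_sub_aeval {R S σ : Type*} [CommRing R] [CommRing S] [Algebra R S]
    {x : S} {u v : σ → S} (huv : ∀ i, x ∣ u i - v i) (p : MvPolynomial σ R) :
    x ∣ aeval u p - aeval v p := by
  rw [← Ideal.mem_span_singleton, ← Ideal.Quotient.eq, ← Ideal.Quotient.mkₐ_eq_mk R,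
    comp_aeval_apply, comp_aeval_apply]
  congr 2 with i
  exact Ideal.Quotient.eq.2 (Ideal.mem_span_singleton.2 (huv i))

theorem Polynomial.sub_dvd_aeval_sub {R S : Type*} [CommRing R] [CommRing S] [Algebra R S]
    (u v : S) (p : R[X]) : u - v ∣ aeval u p - aeval v p := by
  simpa only [eval_map_algebraMap] using sub_dvd_eval_sub u v (p.map (algebraMap R S))

theorem Ideal.Quotient.mk_mem_nonZeroDivisors_of_isRelPrime {R : Type*} [CommRing R]
    [DecompositionMonoid R] {g x : R} (h : IsRelPrime g x) :
    Ideal.Quotient.mk (Ideal.span {g}) x ∈ (R ⧸ Ideal.span {g})⁰ := by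
  refine mem_nonZeroDivisors_iff_left.2 fun u hu => ?_
  obtain ⟨u, rfl⟩ := Ideal.Quotient.mk_surjective u
  rw [← map_mul, Ideal.Quotient.eq_zero_iff_mem, Ideal.mem_span_singleton] at hu
  rw [Ideal.Quotient.eq_zero_iff_mem, Ideal.mem_span_singleton]
  exact h.dvd_of_dvd_mul_left hu

theorem ne_zero_of_quotient_algEquiv_polynomial {k σ : Type*} [Field k] [Finite σ]
    (hσ : 1 < Nat.card σ) {f : MvPolynomial σ k}
    (ε : (MvPolynomial σ k ⧸ Ideal.span {f}) ≃ₐ[k] k[X]) : f ≠ 0 := by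
  rintro rfl
  have hdim : ringKrullDim (MvPolynomial σ k) = 1 := by
    rw [ringKrullDim_eq_of_ringEquiv ((RingEquiv.quotientBot _).symm.trans
      ((Ideal.quotEquivOfEq (by simp)).trans ε.toRingEquiv)),
      Polynomial.ringKrullDim_of_isNoetherianRing, ringKrullDim_eq_zero_of_field, zero_add]
  have := ringKrullDim_add_natCard_le_ringKrullDim_mvPolynomial (R := k) σ
  rw [hdim, ringKrullDim_eq_zero_of_field, zero_add] at this
  exact absurd this (by exact_mod_cast hσ.not_ge)

/-- A line `f = 0` is parametrized by `u ↦ d u`, with inverse `h`. -/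
theorem exists_parametrization_of_quotient_algEquiv_polynomial {k σ : Type*} [CommRing k]
    {f : MvPolynomial σ k} (ε : (MvPolynomial σ k ⧸ Ideal.span {f}) ≃ₐ[k] k[X]) :
    ∃ (d : σ → k[X]) (h : MvPolynomial σ k), aeval d f = 0 ∧ aeval d h = Polynomial.X ∧
      ∀ i, f ∣ X i - Polynomial.aeval h (d i) := by
  set α := ε.toAlgHom.comp (Ideal.Quotient.mkₐ k (Ideal.span {f}))
  have hα : ∀ w, α w = 0 ↔ f ∣ w := fun w => by
    simp [α, Ideal.Quotient.eq_zero_iff_mem, Ideal.mem_span_singleton]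
  have hαd : aeval (fun i => α (X i)) = α := (aeval_unique α).symm
  obtain ⟨h, hh⟩ : ∃ h, α h = Polynomial.X := by
    obtain ⟨q, hq⟩ := Ideal.Quotient.mk_surjective (ε.symm Polynomial.X)
    exact ⟨q, by simp [α, hq]⟩
  refine ⟨fun i => α (X i), h, ?_, by rw [hαd, hh], fun i => (hα _).1 ?_⟩
  · rw [hαd, hα]
  · rw [map_sub, ← Polynomial.aeval_algHom_apply, hh, Polynomial.aeval_X_left_apply, sub_self]

noncomputable section

namespace AsanumaRing

variable {k ι : Type*} [CommRing k]

/-- In `k[ι ⊕ Fin 3]`, `Sum.inl j` is `Xⱼ`, `Sum.inr 0` is `Y`, and `zt 0, zt 1` are `Z, T`. -/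
def zt (i : Fin 2) : ι ⊕ Fin 3 := Sum.inr i.succ

def relation (a : MvPolynomial ι k) (f : MvPolynomial (Fin 2) k) : MvPolynomial (ι ⊕ Fin 3) k :=
  rename Sum.inl a * X (Sum.inr 0) - rename zt f

end AsanumaRing

open AsanumaRing in
abbrev AsanumaRing {k ι : Type*} [CommRing k] (a : MvPolynomial ι k)
    (f : MvPolynomial (Fin 2) k) :=
  MvPolynomial (ι ⊕ Fin 3) k ⧸ Ideal.span {relation a f}

namespace AsanumaRing

variable {k ι : Type*} [CommRing k] (a : MvPolynomial ι k) (f : MvPolynomial (Fin 2) k)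

def constMk : MvPolynomial (ι ⊕ Fin 3) k →ₐ[k] (AsanumaRing a f)[X] :=
  Polynomial.CAlgHom.comp (Ideal.Quotient.mkₐ k _)

theorem constMk_rename_inl_mul_Y :
    constMk a f (rename Sum.inl a) * constMk a f (X (Sum.inr 0)) = constMk a f (rename zt f) := by
  have : constMk a f (relation a f) = 0 := by simp [constMk]
  simpa [relation, sub_eq_zero] using this

theorem polynomial_algHom_ext {S : Type*} [Semiring S] [Algebra k S]
    {F G : (AsanumaRing a f)[X] →ₐ[k] S} (hX : ∀ t, F (constMk a f (X t)) = G (constMk a f (X t)))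
    (hW : F Polynomial.X = G Polynomial.X) : F = G :=
  Polynomial.algHom_ext' (Ideal.Quotient.algHom_ext _ (MvPolynomial.algHom_ext hX)) hW

section lift

variable {S : Type*} [CommRing S] [Algebra k S] (s : MvPolynomial ι k →ₐ[k] S) (y : S)
  (z : Fin 2 → S) (w : S)

def lift (hs : s a * y = aeval z f) : (AsanumaRing a f)[X] →ₐ[k] S :=
  Polynomial.aevalTower (Ideal.Quotient.liftₐ _ (aeval (Sum.elim (s ∘ X) (Fin.cons y z)))
    fun p hp => by
      obtain ⟨q, rfl⟩ := Ideal.mem_span_singleton'.1 hp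
      have hs' : aeval (s ∘ X) a * y = aeval z f := by rwa [← aeval_unique]
      simp [relation, aeval_rename, Function.comp_def, zt] at hs' ⊢
      simp [hs']) w

variable {a f s y z w}

theorem lift_constMk (hs : s a * y = aeval z f) (p : MvPolynomial (ι ⊕ Fin 3) k) :
    lift a f s y z w hs (constMk a f p) = aeval (Sum.elim (s ∘ X) (Fin.cons y z)) p := by
  simp [lift, constMk]
  rfl

theorem lift_X (hs : s a * y = aeval z f) : lift a f s y z w hs Polynomial.X = w :=
  Polynomial.aevalTower_X _ _

theorem lift_constMk_rename_inl (hs : s a * y = aeval z f) (p : MvPolynomial ι k) :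
    lift a f s y z w hs (constMk a f (rename Sum.inl p)) = s p := by
  rw [lift_constMk, aeval_rename, Sum.elim_comp_inl, ← aeval_unique]

theorem lift_constMk_rename_zt (hs : s a * y = aeval z f) (p : MvPolynomial (Fin 2) k) :
    lift a f s y z w hs (constMk a f (rename zt p)) = aeval z p := by
  rw [lift_constMk, aeval_rename]
  rfl

end lift

def ofMvPolynomial (v : (AsanumaRing a f)[X]) (z : Fin 2 → (AsanumaRing a f)[X]) :
    MvPolynomial (ι ⊕ Fin 3) k →ₐ[k] (AsanumaRing a f)[X] :=
  aeval (Sum.elim (fun j => constMk a f (X (Sum.inl j))) (Fin.cons v z))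

/-- The image `h(Z,T) + xW` of `V`. -/
def twistedParam (h : MvPolynomial (Fin 2) k) : (AsanumaRing a f)[X] :=
  constMk a f (rename zt h) + constMk a f (rename Sum.inl a) * Polynomial.X

/-- The images `d(V) + x(Z',T')` of `Z, T`, in the variables `V = Sum.inr 0`, `Z', T' = zt`. -/
def twistedCoords (d : Fin 2 → k[X]) : Fin 2 → MvPolynomial (ι ⊕ Fin 3) k :=
  fun i => Polynomial.aeval (X (Sum.inr 0)) (d i) + rename Sum.inl a * X (zt i)

variable {a f}

@[simp]
theorem ofMvPolynomial_X_inl (v z) (j : ι) :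
    ofMvPolynomial a f v z (X (Sum.inl j)) = constMk a f (X (Sum.inl j)) := by
  simp [ofMvPolynomial]

@[simp]
theorem ofMvPolynomial_X_inr_zero (v z) : ofMvPolynomial a f v z (X (Sum.inr 0)) = v := by
  simp [ofMvPolynomial]

@[simp]
theorem ofMvPolynomial_X_zt (v z) (i : Fin 2) : ofMvPolynomial a f v z (X (zt i)) = z i := by
  simp [ofMvPolynomial, zt]

theorem ofMvPolynomial_rename_inl (v z) (p : MvPolynomial ι k) :
    ofMvPolynomial a f v z (rename Sum.inl p) = constMk a f (rename Sum.inl p) := by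
  have : (ofMvPolynomial a f v z).comp (rename Sum.inl) = (constMk a f).comp (rename Sum.inl) :=
    algHom_ext fun j => by simp
  exact DFunLike.congr_fun this p

theorem dvd_constMk_X_sub_aeval_twistedParam {d : Fin 2 → k[X]} {h : MvPolynomial (Fin 2) k}
    (hfd : ∀ i, f ∣ X i - Polynomial.aeval h (d i)) (i : Fin 2) :
    constMk a f (rename Sum.inl a) ∣
      constMk a f (X (zt i)) - Polynomial.aeval (twistedParam a f h) (d i) := by
  obtain ⟨G, hG⟩ := hfd i
  have hZ : constMk a f (rename Sum.inl a) ∣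
      constMk a f (X (zt i)) - Polynomial.aeval (constMk a f (rename zt h)) (d i) := by
    refine ⟨constMk a f (X (Sum.inr 0)) * constMk a f (rename zt G), ?_⟩
    rw [Polynomial.aeval_algHom_apply, Polynomial.aeval_algHom_apply, ← rename_X, ← map_sub,
      ← map_sub, hG, map_mul, map_mul, ← constMk_rename_inl_mul_Y, mul_assoc]
  have hV : constMk a f (rename Sum.inl a) ∣ Polynomial.aeval (constMk a f (rename zt h)) (d i) -
      Polynomial.aeval (twistedParam a f h) (d i) :=
    (Dvd.intro (-Polynomial.X) (by rw [twistedParam]; ring)).trans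
      (Polynomial.sub_dvd_aeval_sub (constMk a f (rename zt h)) (twistedParam a f h) (d i))
  simpa using hZ.add hV

theorem dvd_aeval_twistedCoords_sub (d : Fin 2 → k[X]) (p : MvPolynomial (Fin 2) k) :
    rename Sum.inl a ∣
      aeval (twistedCoords a d) p - Polynomial.aeval (X (Sum.inr 0)) (aeval d p) := by
  rw [comp_aeval_apply]
  exact dvd_aeval_sub_aeval (fun i => ⟨X (zt i), by simp [twistedCoords]⟩) p

section equiv

variable {d : Fin 2 → k[X]} {h : MvPolynomial (Fin 2) k} {z : Fin 2 → (AsanumaRing a f)[X]}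
  {q p : MvPolynomial (ι ⊕ Fin 3) k}

theorem lift_comp_ofMvPolynomial [IsDomain k] (ha : a ≠ 0)
    (hz : ∀ i, constMk a f (X (zt i)) - Polynomial.aeval (twistedParam a f h) (d i) =
      constMk a f (rename Sum.inl a) * z i)
    (hq : rename Sum.inl a * q = aeval (twistedCoords a d) f)
    (hp : aeval (twistedCoords a d) h = X (Sum.inr 0) + rename Sum.inl a * p) :
    (lift a f (rename Sum.inl) q (twistedCoords a d) (-p) hq).comp
      (ofMvPolynomial a f (twistedParam a f h) z) = AlgHom.id k _ := by
  set ψ := lift a f (rename Sum.inl) q (twistedCoords a d) (-p) hq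
  have hx : ψ (constMk a f (rename Sum.inl a)) = rename Sum.inl a :=
    lift_constMk_rename_inl hq a
  have hx0 : (rename Sum.inl a : MvPolynomial (ι ⊕ Fin 3) k) ≠ 0 :=
    (map_ne_zero_iff _ (rename_injective _ Sum.inl_injective)).2 ha
  have hV : ψ (twistedParam a f h) = X (Sum.inr 0) := by
    rw [twistedParam, map_add, map_mul, hx, lift_constMk_rename_zt, lift_X, hp]
    ring
  have hZ : ∀ i, ψ (z i) = X (zt i) := fun i => by
    refine mul_left_cancel₀ hx0 ?_
    calc rename Sum.inl a * ψ (z i) = ψ (constMk a f (rename Sum.inl a) * z i) := by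
          rw [map_mul, hx]
      _ = twistedCoords a d i - Polynomial.aeval (X (Sum.inr 0)) (d i) := by
        rw [← hz, map_sub, ← Polynomial.aeval_algHom_apply, hV, ← rename_X zt i,
          lift_constMk_rename_zt hq, aeval_X]
      _ = rename Sum.inl a * X (zt i) := by simp [twistedCoords]
  refine algHom_ext fun t => ?_
  rcases t with j | t
  · simp [ψ, lift_constMk hq]
  · refine Fin.cases ?_ (fun i => ?_) t
    · simpa using hV
    · exact (congrArg ψ (ofMvPolynomial_X_zt _ _ i)).trans (hZ i)

theorem ofMvPolynomial_comp_lift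
    (hreg : constMk a f (rename Sum.inl a) ∈ (AsanumaRing a f)[X]⁰)
    (hz : ∀ i, constMk a f (X (zt i)) - Polynomial.aeval (twistedParam a f h) (d i) =
      constMk a f (rename Sum.inl a) * z i)
    (hq : rename Sum.inl a * q = aeval (twistedCoords a d) f)
    (hp : aeval (twistedCoords a d) h = X (Sum.inr 0) + rename Sum.inl a * p) :
    (ofMvPolynomial a f (twistedParam a f h) z).comp
      (lift a f (rename Sum.inl) q (twistedCoords a d) (-p) hq) = AlgHom.id k _ := by
  set φ := ofMvPolynomial a f (twistedParam a f h) z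
  have hx : φ (rename Sum.inl a) = constMk a f (rename Sum.inl a) :=
    ofMvPolynomial_rename_inl _ _ a
  have hZ : ∀ i, φ (twistedCoords a d i) = constMk a f (X (zt i)) := fun i => by
    rw [twistedCoords, map_add, map_mul, ← Polynomial.aeval_algHom_apply, hx,
      ofMvPolynomial_X_inr_zero, ofMvPolynomial_X_zt]
    linear_combination -(hz i)
  have hφ : φ.comp (aeval (twistedCoords a d)) = (constMk a f).comp (rename zt) :=
    algHom_ext fun i => by simp [hZ]
  have hY : φ q = constMk a f (X (Sum.inr 0)) := by
    refine (mul_cancel_left_mem_nonZeroDivisors hreg).1 ?_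
    rw [constMk_rename_inl_mul_Y, ← hx, ← map_mul, hq, ← AlgHom.comp_apply, hφ]
    rfl
  have hW : φ p = -Polynomial.X := by
    refine (mul_cancel_left_mem_nonZeroDivisors hreg).1 ?_
    have := congr(φ $hp)
    rw [← AlgHom.comp_apply, hφ, map_add, map_mul, hx, ofMvPolynomial_X_inr_zero,
      AlgHom.comp_apply, twistedParam] at this
    linear_combination -this
  refine polynomial_algHom_ext a f (fun t => ?_) ?_
  · rcases t with j | t
    · simp [φ, lift_constMk hq]
    · refine Fin.cases ?_ (fun i => ?_) t
      · simpa [lift_constMk hq] using hY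
      · simpa [lift_constMk hq, zt] using hZ i
  · simp [lift_X hq, hW]

theorem nonempty_polynomial_algEquiv [IsDomain k] (ha : a ≠ 0)
    (hreg : constMk a f (rename Sum.inl a) ∈ (AsanumaRing a f)[X]⁰)
    (hdf : aeval d f = 0) (hdh : aeval d h = Polynomial.X)
    (hfd : ∀ i, f ∣ X i - Polynomial.aeval h (d i)) :
    Nonempty ((AsanumaRing a f)[X] ≃ₐ[k] MvPolynomial (ι ⊕ Fin 3) k) := by
  choose z hz using dvd_constMk_X_sub_aeval_twistedParam (a := a) hfd
  obtain ⟨q, hq⟩ := dvd_aeval_twistedCoords_sub (a := a) d f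
  obtain ⟨p, hp⟩ := dvd_aeval_twistedCoords_sub (a := a) d h
  rw [hdf, map_zero, sub_zero] at hq
  rw [hdh, Polynomial.aeval_X, sub_eq_iff_eq_add'] at hp
  exact ⟨AlgEquiv.ofAlgHom _ _ (lift_comp_ofMvPolynomial ha hz hq.symm hp)
    (ofMvPolynomial_comp_lift hreg hz hq.symm hp)⟩

end equiv

theorem not_X_inl_dvd_relation (hf : f ≠ 0) (j : ι) : ¬ X (Sum.inl j) ∣ relation a f := by
  rintro ⟨b, hb⟩
  set τ : ι ⊕ Fin 3 → MvPolynomial (Fin 2) k := Sum.elim 0 (Fin.cons 0 X)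
  have := congr(aeval τ $hb)
  rw [relation, map_sub, map_mul, map_mul, aeval_rename (k := zt), show τ ∘ zt = X from rfl,
    aeval_X_left_apply, aeval_X, aeval_X] at this
  simp [τ, hf] at this

end AsanumaRing

namespace AsanumaRing

variable {k ι : Type*} [Field k] [Fintype ι]

theorem constMk_prod_X_pow_mem_nonZeroDivisors (r : ι → ℕ) {f : MvPolynomial (Fin 2) k}
    (hf : f ≠ 0) :
    constMk (∏ j, X j ^ r j) f (rename Sum.inl (∏ j, X j ^ r j)) ∈
      (AsanumaRing (∏ j, X j ^ r j) f)[X]⁰ := by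
  refine Polynomial.mem_nonZeroDivisors_of_leadingCoeff ?_
  rw [constMk, AlgHom.comp_apply, Polynomial.CAlgHom_apply, Polynomial.leadingCoeff_C]
  refine Ideal.Quotient.mk_mem_nonZeroDivisors_of_isRelPrime ?_
  simp only [map_prod, map_pow, rename_X]
  exact IsRelPrime.prod_right fun j _ => IsRelPrime.pow_right <|
    ((X_prime.irreducible.isRelPrime_iff_not_dvd).2 (not_X_inl_dvd_relation hf j)).symm

end AsanumaRing

end

open MvPolynomial in
theorem asanuma_ring_stably_polynomial_general
    {k : Type*} [Field k] (m : ℕ) (r : Fin m → ℕ)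
    (f : MvPolynomial (Fin 2) k)
    (hline : Nonempty ((MvPolynomial (Fin 2) k ⧸ Ideal.span {f}) ≃ₐ[k] Polynomial k)) :
    Nonempty (Polynomial
        (MvPolynomial (Fin m ⊕ Fin 3) k ⧸
          Ideal.span {(∏ j : Fin m, X (Sum.inl j) ^ r j) * X (Sum.inr 0)
            - rename (fun i : Fin 2 => (Sum.inr i.succ : Fin m ⊕ Fin 3)) f})
      ≃ₐ[k] MvPolynomial (Fin (m + 3)) k) := by
  obtain ⟨ε⟩ := hline
  obtain ⟨d, h, hdf, hdh, hfd⟩ := exists_parametrization_of_quotient_algEquiv_polynomial ε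
  have hf : f ≠ 0 := ne_zero_of_quotient_algEquiv_polynomial (by simp) ε
  have hrel : (∏ j, X (Sum.inl j) ^ r j) * X (Sum.inr 0) -
      rename (fun i : Fin 2 => (Sum.inr i.succ : Fin m ⊕ Fin 3)) f =
      AsanumaRing.relation (∏ j, X j ^ r j) f := by
    simp [AsanumaRing.relation, map_prod]
    rfl
  rw [hrel]
  obtain ⟨e⟩ := AsanumaRing.nonempty_polynomial_algEquiv
    (Finset.prod_ne_zero_iff.2 fun j _ => pow_ne_zero _ (X_ne_zero j))
    (AsanumaRing.constMk_prod_X_pow_mem_nonZeroDivisors r hf) hdf hdh hfd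
  exact ⟨e.trans (renameEquiv k finSumFinEquiv)⟩

open MvPolynomial in
/-- If `f` is a line in `k[Z,T]`, then for
`A = k[X₁,…,X_m,Y,Z,T]/(X₁^{r₁}⋯X_m^{r_m}·Y − f(Z,T))` with each `rᵢ > 1`,
the ring `A[W]` is a polynomial ring in `m+3` variables over `k`. -/
theorem asanuma_ring_stably_polynomial
    {k : Type*} [Field k] (m : ℕ) (hm : 1 ≤ m) (r : Fin m → ℕ) (hr : ∀ j, 1 < r j)
    (f : MvPolynomial (Fin 2) k)
    (hline : Nonempty ((MvPolynomial (Fin 2) k ⧸ Ideal.span {f}) ≃ₐ[k] Polynomial k)) :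
    Nonempty (Polynomial
        (MvPolynomial (Fin m ⊕ Fin 3) k ⧸
          Ideal.span {(∏ j : Fin m, X (Sum.inl j) ^ r j) * X (Sum.inr 0)
            - rename (fun i : Fin 2 => (Sum.inr i.succ : Fin m ⊕ Fin 3)) f})
      ≃ₐ[k] MvPolynomial (Fin (m + 3)) k) :=
  asanuma_ring_stably_polynomial_general m r f hline
end

section
/- Let k be a field and A = k[X₁,…,X_n] a polynomial ring with n > 1. Then the Derksen invariant DK(A), the k-subalgebra of A generated by all invariants of non-trivial exponential maps on A, equals A. -/
open Polynomial in
/-- The Derksen invariant: the `k`-subalgebra generated by the invariants of all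
non-trivial exponential maps. -/
def derksenInvariant (k A : Type*) [CommSemiring k] [CommRing A] [Algebra k A] :
    Subalgebra k A :=
  Algebra.adjoin k {a | ∃ φ : A →ₐ[k] Polynomial A,
    IsExpMap φ ∧ (∃ b, φ b ≠ C b) ∧ φ a = C a}

open Polynomial

noncomputable def expφ {k : Type*} [Field k] {n : ℕ} (j : Fin n) :
    MvPolynomial (Fin n) k →ₐ[k] Polynomial (MvPolynomial (Fin n) k) :=
  MvPolynomial.aeval (fun l => if l = j then Polynomial.X + Polynomial.C (MvPolynomial.X l)
    else Polynomial.C (MvPolynomial.X l))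

lemma expφ_X {k : Type*} [Field k] {n : ℕ} (j i : Fin n) :
    (expφ (k := k) j) (MvPolynomial.X i) =
      if i = j then Polynomial.X + Polynomial.C (MvPolynomial.X i)
      else Polynomial.C (MvPolynomial.X i) := by
  simp [expφ]

lemma expφ_eval0 {k : Type*} [Field k] {n : ℕ} (j : Fin n) (a : MvPolynomial (Fin n) k) :
    ((expφ j) a).eval 0 = a := by
  induction a using MvPolynomial.induction_on with
  | C c => simp [expφ, MvPolynomial.algebraMap_eq]
  | add p q hp hq => simp only [map_add, eval_add, hp, hq]
  | mul_X p i hp =>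
    rw [map_mul, eval_mul, hp, expφ_X]
    by_cases h : i = j <;> simp [h]

set_option synthInstance.maxHeartbeats 800000 in
lemma expφ_coact {k : Type*} [Field k] {n : ℕ} (j : Fin n) (a : MvPolynomial (Fin n) k) :
    ((expφ j) a).map (expφ j).toRingHom =
      ((expφ j) a).eval₂ (C.comp (C : MvPolynomial (Fin n) k →+* _)) (X + C X) := by
  have hCC : (algebraMap (MvPolynomial (Fin n) k)
      (Polynomial (Polynomial (MvPolynomial (Fin n) k)))) = C.comp C := by
    refine RingHom.ext fun a => ?_
    rw [RingHom.comp_apply, Polynomial.algebraMap_apply, Polynomial.algebraMap_eq]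
  have h : (Polynomial.mapAlgHom (expφ j)).comp (expφ j)
      = ((Polynomial.aeval (X + C X : Polynomial (Polynomial (MvPolynomial (Fin n) k)))).restrictScalars k).comp (expφ j) := by
    apply MvPolynomial.algHom_ext
    intro i
    rw [AlgHom.comp_apply, AlgHom.comp_apply, expφ_X, AlgHom.restrictScalars_apply,
      coe_mapAlgHom]
    by_cases h : i = j
    · rw [if_pos h, Polynomial.map_add, Polynomial.map_X, Polynomial.map_C, map_add,
        aeval_X, aeval_C, hCC]
      simp [expφ_X, h, add_assoc]
    · rw [if_neg h, Polynomial.map_C, aeval_C, hCC]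
      simp [expφ_X, h]
  have h2 := DFunLike.congr_fun h a
  rw [AlgHom.comp_apply, AlgHom.comp_apply, AlgHom.restrictScalars_apply, coe_mapAlgHom,
    Polynomial.aeval_def, hCC] at h2
  exact h2

/-- For a polynomial ring in `n > 1` variables, the Derksen invariant is everything. -/
theorem derksenInvariant_polynomial_ring
    {k : Type*} [Field k] (n : ℕ) (hn : 1 < n) :
    derksenInvariant k (MvPolynomial (Fin n) k) = ⊤ := by
  rw [eq_top_iff, ← MvPolynomial.adjoin_range_X]
  apply Algebra.adjoin_le
  rintro _ ⟨i, rfl⟩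
  apply Algebra.subset_adjoin
  obtain ⟨j, hj⟩ : ∃ j : Fin n, j ≠ i := by
    rcases Decidable.eq_or_ne i ⟨0, by omega⟩ with h | h
    · exact ⟨⟨1, hn⟩, by simp [h, Fin.ext_iff]⟩
    · exact ⟨⟨0, by omega⟩, fun hc => h hc.symm⟩
  refine ⟨expφ j, ⟨expφ_eval0 j, expφ_coact j⟩, ⟨MvPolynomial.X j, ?_⟩, ?_⟩
  · rw [expφ_X, if_pos rfl]
    intro hc
    have := congrArg (fun p => Polynomial.coeff p 1) hc
    simp at this
  · rw [expφ_X, if_neg (Ne.symm hj)]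
end

section
/- Let B be an affine domain over an infinite field k, and f ∈ B such that f − λ is a prime element of B for infinitely many λ ∈ k. Let φ be a non-trivial exponential map on B with f ∈ B^φ. Then there exist infinitely many β ∈ k such that f − β is prime in B and φ induces a non-trivial exponential map φ̂ on B/(f−β), with the image of B^φ in B/(f−β) contained in (B/(f−β))^{φ̂}. -/
open Polynomial

theorem WfDvdMonoid.exists_finset_associated_of_prime_dvd {α : Type*} [CommMonoidWithZero α]
    [IsCancelMulZero α] [WfDvdMonoid α] {a : α} (ha : a ≠ 0) :
    ∃ s : Finset α, ∀ p, Prime p → p ∣ a → ∃ q ∈ s, Associated p q := by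
  classical
  obtain ⟨M, hirr, hprod⟩ := WfDvdMonoid.exists_factors a ha
  refine ⟨M.toFinset, fun p hp hpa => ?_⟩
  obtain ⟨q, hqM, hpq⟩ := hp.exists_mem_multiset_dvd (hpa.trans hprod.symm.dvd)
  exact ⟨q, Multiset.mem_toFinset.2 hqM, hp.irreducible.associated_of_dvd (hirr q hqM) hpq⟩

section Fibres

variable {k B : Type*} [Field k] [CommRing B] [Algebra k B]

theorem eq_of_associated_sub_algebraMap {f : B} {β β' : k}
    (hβ : ¬IsUnit (f - algebraMap k B β))
    (h : Associated (f - algebraMap k B β) (f - algebraMap k B β')) : β = β' := by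
  by_contra hne
  have hdvd : f - algebraMap k B β ∣ algebraMap k B (β' - β) := by
    rw [map_sub, show algebraMap k B β' - algebraMap k B β
        = (f - algebraMap k B β) - (f - algebraMap k B β') by ring]
    exact dvd_sub dvd_rfl h.dvd
  exact hβ (isUnit_of_dvd_unit hdvd ((sub_ne_zero.2 (Ne.symm hne)).isUnit.map _))

theorem finite_setOf_prime_sub_algebraMap_dvd [IsDomain B] [IsNoetherianRing B] (f : B)
    {a : B} (ha : a ≠ 0) :
    {β : k | Prime (f - algebraMap k B β) ∧ f - algebraMap k B β ∣ a}.Finite := by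
  obtain ⟨s, hs⟩ := WfDvdMonoid.exists_finset_associated_of_prime_dvd ha
  have hcover : {β : k | Prime (f - algebraMap k B β) ∧ f - algebraMap k B β ∣ a} ⊆
      ⋃ q ∈ s, {β : k | Prime (f - algebraMap k B β) ∧ Associated (f - algebraMap k B β) q} := by
    rintro β ⟨hβ, hβa⟩
    obtain ⟨q, hq, hβq⟩ := hs _ hβ hβa
    exact Set.mem_biUnion hq ⟨hβ, hβq⟩
  refine (s.finite_toSet.biUnion fun q _ => Set.Subsingleton.finite ?_).subset hcover
  rintro β ⟨hβ, hβq⟩ β' ⟨-, hβ'q⟩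
  exact eq_of_associated_sub_algebraMap hβ.not_isUnit (hβq.trans hβ'q.symm)

end Fibres

section Descent

variable {k A : Type*} [CommSemiring k] [CommRing A] [Algebra k A]

theorem IsExpMap.exists_coeff_ne_zero {φ : A →ₐ[k] A[X]} (hφ : IsExpMap φ) {b : A}
    (hb : φ b ≠ C b) : ∃ n ≠ 0, (φ b).coeff n ≠ 0 := by
  by_contra! h
  refine hb (Polynomial.ext fun n => ?_)
  rcases eq_or_ne n 0 with rfl | hn
  · rw [coeff_zero_eq_eval_zero, hφ.1, coeff_C_zero]
  · rw [h n hn, coeff_C, if_neg hn]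

noncomputable def descendQuotient (φ : A →ₐ[k] A[X]) (I : Ideal A)
    (hI : ∀ a ∈ I, (φ a).map (Ideal.Quotient.mk I) = 0) : A ⧸ I →ₐ[k] (A ⧸ I)[X] :=
  Ideal.Quotient.liftₐ I ((mapAlgHom (Ideal.Quotient.mkₐ k I)).comp φ) hI

theorem descendQuotient_mk (φ : A →ₐ[k] A[X]) (I : Ideal A)
    (hI : ∀ a ∈ I, (φ a).map (Ideal.Quotient.mk I) = 0) (b : A) :
    descendQuotient φ I hI (Ideal.Quotient.mk I b) = (φ b).map (Ideal.Quotient.mk I) :=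
  rfl

theorem map_mk_span_singleton_eq_zero_of_invariant {φ : A →ₐ[k] A[X]} {g : A} (hg : φ g = C g)
    (a : A) (ha : a ∈ Ideal.span {g}) : (φ a).map (Ideal.Quotient.mk (Ideal.span {g})) = 0 := by
  obtain ⟨c, rfl⟩ := Ideal.mem_span_singleton.1 ha
  rw [map_mul, hg, Polynomial.map_mul, map_C, Ideal.Quotient.mk_singleton_self, map_zero,
    zero_mul]

theorem isExpMap_descendQuotient {φ : A →ₐ[k] A[X]} (hφ : IsExpMap φ) (I : Ideal A)
    (hI : ∀ a ∈ I, (φ a).map (Ideal.Quotient.mk I) = 0) :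
    IsExpMap (descendQuotient φ I hI) := by
  have hcomp : (descendQuotient φ I hI).toRingHom.comp (Ideal.Quotient.mk I)
      = (mapRingHom (Ideal.Quotient.mk I)).comp φ.toRingHom :=
    RingHom.ext (descendQuotient_mk φ I hI)
  constructor
  · intro x
    obtain ⟨b, rfl⟩ := Ideal.Quotient.mk_surjective x
    rw [descendQuotient_mk, eval_zero_map, hφ.1]
  · intro x
    obtain ⟨b, rfl⟩ := Ideal.Quotient.mk_surjective x
    rw [descendQuotient_mk, map_map, hcomp, ← map_map, hφ.2 b, ← coe_mapRingHom,
      hom_eval₂, eval₂_map]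
    congr 1
    · ext c : 2
      simp
    · simp

end Descent

open Polynomial in
theorem exponential_map_descends_to_fibers_general
    {k B : Type*} [Field k] [CommRing B] [IsDomain B] [Algebra k B]
    [Algebra.FiniteType k B] (f : B)
    (hprime : {lam : k | Prime (f - algebraMap k B lam)}.Infinite)
    (φ : B →ₐ[k] Polynomial B) (hφ : IsExpMap φ)
    (hnt : ∃ b, φ b ≠ C b) (hf : φ f = C f) :
    {β : k | Prime (f - algebraMap k B β) ∧
      ∃ ψ : (B ⧸ Ideal.span {f - algebraMap k B β}) →ₐ[k]
          Polynomial (B ⧸ Ideal.span {f - algebraMap k B β}),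
        IsExpMap ψ ∧ (∃ c, ψ c ≠ C c) ∧
        (∀ b : B, ψ (Ideal.Quotient.mk _ b)
            = (φ b).map (Ideal.Quotient.mk (Ideal.span {f - algebraMap k B β}))) ∧
        (∀ b : B, φ b = C b →
          ψ (Ideal.Quotient.mk _ b) = C (Ideal.Quotient.mk _ b))}.Infinite := by
  obtain ⟨b, hb⟩ := hnt
  obtain ⟨n, hn0, ha⟩ := hφ.exists_coeff_ne_zero hb
  have : IsNoetherianRing B := Algebra.FiniteType.isNoetherianRing k B
  refine (hprime.sdiff (finite_setOf_prime_sub_algebraMap_dvd f ha)).mono ?_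
  rintro β ⟨hβ, hβa⟩
  have hg : φ (f - algebraMap k B β) = C (f - algebraMap k B β) := by
    rw [map_sub, hf, AlgHom.commutes, Polynomial.algebraMap_apply, map_sub]
  have hI := map_mk_span_singleton_eq_zero_of_invariant hg
  refine ⟨hβ, descendQuotient φ _ hI, isExpMap_descendQuotient hφ _ hI,
    ⟨Ideal.Quotient.mk _ b, ?_⟩, descendQuotient_mk φ _ hI,
    fun c hc => by rw [descendQuotient_mk, hc, map_C]⟩
  intro h
  have hcoeff := congrArg (coeff · n) h
  simp only [descendQuotient_mk, coeff_map, coeff_C, if_neg hn0,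
    Ideal.Quotient.eq_zero_iff_mem, Ideal.mem_span_singleton] at hcoeff
  exact hβa ⟨hβ, hcoeff⟩

open Polynomial in
/-- If `B` is an affine domain over an infinite field `k`, `f − λ` is prime for
infinitely many `λ`, and `φ` is a non-trivial exponential map with `f` invariant,
then for infinitely many `β` the element `f − β` is prime and `φ` induces a
non-trivial exponential map on `B/(f − β)` under which the image of `B^φ` is
invariant. -/
theorem exponential_map_descends_to_fibers
    {k B : Type*} [Field k] [Infinite k] [CommRing B] [IsDomain B] [Algebra k B]
    [Algebra.FiniteType k B] (f : B)
    (hprime : {lam : k | Prime (f - algebraMap k B lam)}.Infinite)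
    (φ : B →ₐ[k] Polynomial B) (hφ : IsExpMap φ)
    (hnt : ∃ b, φ b ≠ C b) (hf : φ f = C f) :
    {β : k | Prime (f - algebraMap k B β) ∧
      ∃ ψ : (B ⧸ Ideal.span {f - algebraMap k B β}) →ₐ[k]
          Polynomial (B ⧸ Ideal.span {f - algebraMap k B β}),
        IsExpMap ψ ∧ (∃ c, ψ c ≠ C c) ∧
        (∀ b : B, ψ (Ideal.Quotient.mk _ b)
            = (φ b).map (Ideal.Quotient.mk (Ideal.span {f - algebraMap k B β}))) ∧
        (∀ b : B, φ b = C b →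
          ψ (Ideal.Quotient.mk _ b) = C (Ideal.Quotient.mk _ b))}.Infinite :=
  exponential_map_descends_to_fibers_general f hprime φ hφ hnt hf
end

section
/- Let k be a field and f(Z,T) = a₀(Z) + a₁(Z)·T ∈ k[Z,T] with a₀, a₁ ∈ k[Z]. Suppose f is a line (k[Z,T]/(f) ≅ k[X]). Then f is a variable of k[Z,T], i.e., there exists g ∈ k[Z,T] with k[Z,T] = k[f,g]. -/
/-!
Write `k[Z][T]` for `k[X][X]` (so `Z = C X`, `T = X`), let `φ : k[Z][T] → k[W]` be the surjection
with kernel `(f)`, and put `p = φ Z`, `q = φ T`.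
If `p` is a constant `c`, then `f` divides `Z - c`, which forces `a₁ = 0` and `deg a₀ = 1`.
Otherwise `g ↦ g(p)` is injective. If moreover `a₁ = 0`, then `a₀(p) = 0` gives `a₀ = 0`, so
`φ` is an isomorphism `k[Z,T] ≅ k[W]`, impossible as `k[W]` is a PID. If `a₁ ≠ 0`, the relation
`a₁(p) q = -a₀(p)` shows that `a₁(p)ⁿ W = h(p)` for some `n` and `h`; comparing degrees gives
`deg p ∣ 1`, so `q = r(p)` for some `r`, and then `f` divides the monic `T - r(Z)`, making `a₁` a
unit. In the two surviving cases `f` is visibly a coordinate, with partner `Z`, respectively `T`.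
-/

open Polynomial

namespace Polynomial

section CommRing

variable {R : Type*} [CommRing R]

theorem aeval_C_X_eq_C (g : R[X]) : aeval (C X : R[X][X]) g = C g := by
  simpa using aeval_algHom_apply (CAlgHom : R[X] →ₐ[R] R[X][X]) X g

theorem C_mem_of_C_X_mem {S : Subalgebra R R[X][X]} (hS : C X ∈ S) (g : R[X]) :
    C g ∈ S :=
  aeval_C_X_eq_C g ▸
    Algebra.adjoin_le (Set.singleton_subset_iff.mpr hS) (aeval_mem_adjoin_singleton R _)

theorem eq_top_of_C_X_mem_of_X_mem {S : Subalgebra R R[X][X]} (hC : C X ∈ S)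
    (hX : X ∈ S) : S = ⊤ := by
  refine Algebra.eq_top_iff.mpr fun F => ?_
  induction F using Polynomial.induction_on' with
  | add F G hF hG => exact add_mem hF hG
  | monomial n g =>
    rw [← C_mul_X_pow_eq_monomial]
    exact mul_mem (C_mem_of_C_X_mem hC g) (pow_mem hX n)

theorem adjoin_C_X_X_eq_top : Algebra.adjoin R {(C X : R[X][X]), X} = ⊤ :=
  eq_top_of_C_X_mem_of_X_mem (Algebra.subset_adjoin (by simp)) (Algebra.subset_adjoin (by simp))

theorem adjoin_C_add_C_mul_X_C_X_eq_top {a₀ a₁ : R[X]} (ha₁ : IsUnit a₁) :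
    Algebra.adjoin R {C a₀ + C a₁ * X, (C X : R[X][X])} = ⊤ := by
  set S := Algebra.adjoin R {C a₀ + C a₁ * X, (C X : R[X][X])}
  have hf : C a₀ + C a₁ * X ∈ S := Algebra.subset_adjoin (Set.mem_insert _ _)
  have hC : C X ∈ S := Algebra.subset_adjoin (Set.mem_insert_of_mem _ rfl)
  have hX : C (↑ha₁.unit⁻¹ : R[X]) * (C a₀ + C a₁ * X - C a₀) = X := by
    rw [add_sub_cancel_left, ← mul_assoc, ← C_mul, IsUnit.val_inv_mul, C_1, one_mul]
  refine eq_top_of_C_X_mem_of_X_mem hC (hX ▸ ?_)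
  exact mul_mem (C_mem_of_C_X_mem hC _) (sub_mem hf (C_mem_of_C_X_mem hC _))

theorem _root_.AlgHom.map_C_eq_aeval {A : Type*} [CommRing A] [Algebra R A]
    (φ : R[X][X] →ₐ[R] A) (g : R[X]) : φ (C g) = aeval (φ (C X)) g := by
  rw [aeval_algHom_apply, aeval_C_X_eq_C]

theorem exists_pow_mul_eq_aeval_of_mem_adjoin {A : Type*} [CommRing A] [Algebra R A]
    {a₀ a₁ : R[X]} {p q : A} (hrel : aeval p a₀ + aeval p a₁ * q = 0) {x : A}
    (hx : x ∈ Algebra.adjoin R {p, q}) :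
    ∃ (n : ℕ) (h : R[X]), aeval p a₁ ^ n * x = aeval p h := by
  induction hx using Algebra.adjoin_induction with
  | mem x hx =>
    rcases hx with rfl | rfl
    · exact ⟨0, X, by simp⟩
    · exact ⟨1, -a₀, by rw [map_neg]; linear_combination hrel⟩
  | algebraMap r => exact ⟨0, C r, by simp⟩
  | add x y _ _ hx hy =>
    obtain ⟨m, u, hu⟩ := hx
    obtain ⟨n, v, hv⟩ := hy
    refine ⟨m + n, a₁ ^ n * u + a₁ ^ m * v, ?_⟩
    simp only [map_add, map_mul, map_pow, ← hu, ← hv]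
    ring
  | mul x y _ _ hx hy =>
    obtain ⟨m, u, hu⟩ := hx
    obtain ⟨n, v, hv⟩ := hy
    exact ⟨m + n, u * v, by rw [map_mul, ← hu, ← hv]; ring⟩

end CommRing

section Domain

variable {R : Type*} [CommRing R] [IsDomain R]

theorem natDegree_eq_one_of_adjoin_pair_eq_top {a₀ a₁ p q : R[X]}
    (hadj : Algebra.adjoin R {p, q} = ⊤)
    (hrel : aeval p a₀ + aeval p a₁ * q = 0) (ha₁ : aeval p a₁ ≠ 0) : p.natDegree = 1 := by
  obtain ⟨n, h, hX⟩ :=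
    exists_pow_mul_eq_aeval_of_mem_adjoin hrel (hadj ▸ Algebra.mem_top (x := X))
  have hdeg : n * (a₁.natDegree * p.natDegree) + 1 = h.natDegree * p.natDegree := by
    have := congrArg natDegree hX
    rwa [natDegree_mul (pow_ne_zero n ha₁) X_ne_zero, natDegree_pow, natDegree_X,
      ← comp_eq_aeval, ← comp_eq_aeval, natDegree_comp, natDegree_comp] at this
  exact Nat.dvd_one.mp <|
    (Nat.dvd_add_right (dvd_mul_of_dvd_right (dvd_mul_left _ _) n)).mp (hdeg ▸ dvd_mul_left _ _)

theorem aeval_injective_of_natDegree_ne_zero {p : R[X]} (hp : p.natDegree ≠ 0) :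
    Function.Injective (aeval p : R[X] →ₐ[R] R[X]) :=
  transcendental_iff_injective.mp <| p.transcendental hp <| mem_nonZeroDivisors_of_ne_zero <|
    leadingCoeff_ne_zero.mpr (ne_zero_of_natDegree_gt (Nat.pos_of_ne_zero hp))

theorem not_nonempty_ringEquiv_of_isPrincipalIdealRing {S : Type*} [CommRing S]
    [IsPrincipalIdealRing S] (hR : ¬IsField R) :
    ¬Nonempty (R[X] ≃+* S) := fun ⟨e⟩ =>
  have := IsPrincipalIdealRing.of_surjective e.symm.toRingHom e.symm.surjective
  hR Ideal.IsField.of_isPrincipalIdealRing_polynomial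

end Domain

section Field

variable {k : Type*} [Field k]

theorem aeval_surjective_of_natDegree_eq_one {p : k[X]} (hp : p.natDegree = 1) :
    Function.Surjective (aeval p : k[X] →ₐ[k] k[X]) := by
  obtain ⟨a, ha, b, rfl⟩ := natDegree_eq_one.mp hp
  let := invertibleOfNonzero ha
  exact (algEquivCMulXAddC a b).surjective

theorem adjoin_C_X_eq_top_of_natDegree_eq_one {a₀ : k[X]} (ha₀ : a₀.natDegree = 1) :
    Algebra.adjoin k {C a₀, (X : k[X][X])} = ⊤ := by
  obtain ⟨a, ha, b, rfl⟩ := natDegree_eq_one.mp ha₀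
  have hCX : (C X : k[X][X]) = C (C a⁻¹) * (C (C a * X + C b) - C (C b)) := by
    rw [map_add, add_sub_cancel_right, ← map_mul, ← mul_assoc, ← C_mul, inv_mul_cancel₀ ha, C_1,
      one_mul]
  refine eq_top_of_C_X_mem_of_X_mem ?_ (Algebra.subset_adjoin (by simp))
  rw [hCX]
  exact mul_mem (Subalgebra.algebraMap_mem _ _)
    (sub_mem (Algebra.subset_adjoin (by simp)) (Subalgebra.algebraMap_mem _ _))

end Field

end Polynomial

section Line

variable {k : Type*} [Field k] {a₀ a₁ : k[X]} {φ : k[X][X] →ₐ[k] k[X]}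

theorem eq_zero_and_natDegree_eq_one_of_apply_C_X_eq_C
    (hker : RingHom.ker φ = Ideal.span {C a₀ + C a₁ * X}) {c : k} (hc : φ (C X) = C c) :
    a₁ = 0 ∧ a₀.natDegree = 1 := by
  have hdvd : C a₀ + C a₁ * X ∣ C (X - C c) := by
    rw [← Ideal.mem_span_singleton, ← hker, RingHom.mem_ker, φ.map_C_eq_aeval, hc]
    simp
  have hf : ¬IsUnit (C a₀ + C a₁ * X) := fun hu => by
    simpa [RingHom.mem_ker.mp (hker ▸ Ideal.mem_span_singleton_self _)] using hu.map φ
  obtain rfl : a₁ = 0 := by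
    have := natDegree_le_of_dvd hdvd (C_ne_zero.mpr (X_sub_C_ne_zero c))
    rw [natDegree_C, Nat.le_zero] at this
    have hcoeff := coeff_eq_zero_of_natDegree_lt (p := C a₀ + C a₁ * X) (n := 1) (by omega)
    simpa using hcoeff
  rw [C_0, zero_mul, add_zero] at hdvd hf
  have ha₀ : a₀ ∣ X - C c := by simpa using (C_dvd_iff_dvd_coeff _ _).mp hdvd 0
  have ha₀' : ¬IsUnit a₀ := fun hu => hf (hu.map C)
  refine ⟨rfl, le_antisymm ?_ (natDegree_pos_of_not_isUnit_of_dvd_monic (monic_X_sub_C c) ha₀' ha₀)⟩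
  simpa using natDegree_le_of_dvd ha₀ (X_sub_C_ne_zero c)

theorem natDegree_apply_C_X_eq_zero_of_ker_eq_span_C (hφ : Function.Surjective φ)
    (hker : RingHom.ker φ = Ideal.span {C a₀}) : (φ (C X)).natDegree = 0 := by
  by_contra hp
  have ha₀ : a₀ = 0 := by
    refine aeval_injective_of_natDegree_ne_zero hp ?_
    rw [← φ.map_C_eq_aeval, map_zero, ← RingHom.mem_ker, hker]
    simp
  have hinj : Function.Injective φ := by
    rw [injective_iff_map_eq_zero]
    intro F hF
    simpa [ha₀, hker] using (RingHom.mem_ker (f := φ)).mpr hF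
  exact not_nonempty_ringEquiv_of_isPrincipalIdealRing (not_isField k)
    ⟨RingEquiv.ofBijective φ ⟨hinj, hφ⟩⟩

theorem isUnit_of_natDegree_apply_C_X_ne_zero (hφ : Function.Surjective φ)
    (hker : RingHom.ker φ = Ideal.span {C a₀ + C a₁ * X}) (ha₁ : a₁ ≠ 0)
    (hp : (φ (C X)).natDegree ≠ 0) : IsUnit a₁ := by
  set p := φ (C X)
  set q := φ X
  have hrel : aeval p a₀ + aeval p a₁ * q = 0 := by
    rw [← φ.map_C_eq_aeval, ← φ.map_C_eq_aeval, ← map_mul, ← map_add, ← RingHom.mem_ker, hker]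
    exact Ideal.mem_span_singleton_self _
  have hadj : Algebra.adjoin k {p, q} = ⊤ := by
    rw [← Set.image_pair, Algebra.adjoin_image, adjoin_C_X_X_eq_top, Algebra.map_top,
      AlgHom.range_eq_top]
    exact hφ
  have hdeg : p.natDegree = 1 := natDegree_eq_one_of_adjoin_pair_eq_top hadj hrel
    ((map_ne_zero_iff _ (aeval_injective_of_natDegree_ne_zero hp)).mpr ha₁)
  obtain ⟨r, hr⟩ := aeval_surjective_of_natDegree_eq_one hdeg q
  have hdvd : C a₀ + C a₁ * X ∣ X - C r := by
    rw [← Ideal.mem_span_singleton, ← hker, RingHom.mem_ker, map_sub, φ.map_C_eq_aeval, hr,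
      sub_self]
  have := (monic_X_sub_C r).isUnit_leadingCoeff_of_dvd hdvd
  rwa [add_comm, leadingCoeff_linear ha₁] at this

theorem isUnit_or_eq_zero_and_natDegree_eq_one (hφ : Function.Surjective φ)
    (hker : RingHom.ker φ = Ideal.span {C a₀ + C a₁ * X}) :
    IsUnit a₁ ∨ a₁ = 0 ∧ a₀.natDegree = 1 := by
  by_cases hp : (φ (C X)).natDegree = 0
  · exact .inr (eq_zero_and_natDegree_eq_one_of_apply_C_X_eq_C hker (eq_C_of_natDegree_eq_zero hp))
  by_cases ha₁ : a₁ = 0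
  · rw [ha₁, C_0, zero_mul, add_zero] at hker
    exact absurd (natDegree_apply_C_X_eq_zero_of_ker_eq_span_C hφ hker) hp
  exact .inl (isUnit_of_natDegree_apply_C_X_ne_zero hφ hker ha₁ hp)

end Line

open Polynomial in
/-- If `f = a₀(Z) + a₁(Z)T` is a line in `k[Z,T]`, then `f` is a variable of
`k[Z,T]`: there is `g` with `k[Z,T] = k[f,g]`. Here `k[Z,T]` is
`Polynomial (Polynomial k)` with `T` the outer variable. -/
theorem line_linear_in_T_is_variable
    {k : Type*} [Field k] (a₀ a₁ : Polynomial k)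
    (hline : Nonempty ((Polynomial (Polynomial k) ⧸
        Ideal.span {(C a₀ + C a₁ * X : Polynomial (Polynomial k))})
      ≃ₐ[k] Polynomial k)) :
    ∃ g : Polynomial (Polynomial k),
      Algebra.adjoin k {(C a₀ + C a₁ * X : Polynomial (Polynomial k)), g}
        = (⊤ : Subalgebra k (Polynomial (Polynomial k))) := by
  obtain ⟨e⟩ := hline
  let φ := e.toAlgHom.comp (Ideal.Quotient.mkₐ k _)
  have hker : RingHom.ker φ = Ideal.span {C a₀ + C a₁ * X} := by
    ext F
    simp [φ, RingHom.mem_ker, Ideal.Quotient.eq_zero_iff_mem]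
  rcases isUnit_or_eq_zero_and_natDegree_eq_one
    (e.surjective.comp (Ideal.Quotient.mkₐ_surjective k _)) hker with ha₁ | ⟨rfl, ha₀⟩
  · exact ⟨C X, adjoin_C_add_C_mul_X_C_X_eq_top ha₁⟩
  · exact ⟨X, by simpa using adjoin_C_X_eq_top_of_natDegree_eq_one ha₀⟩
end

section
/- Let k be a field and D = k[X₁,…,X_m,Y,Z,T]/(X₁^{r₁}⋯X_m^{r_m}Y − G) where G ∈ k[X₁,…,X_m,Z,T] is nonzero and not divisible by X_j for any j. Then D is an integral domain. -/
/-!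
Write `A = k[X₁,…,X_m,Z,T]`. After renaming the variables, `k[X₁,…,X_m,Y,Z,T] = A[Y]` and the
relation becomes the linear polynomial `c Y - G` with `c = X₁^{r₁}⋯X_m^{r_m}`. Since the `X_j` are
prime in `A` and none of them divides `G`, the coefficients `c` and `G` are relatively prime, so
`c Y - G` is irreducible in `A[Y]`; and `A[Y]` is a UFD, so it is prime.
-/

def sumFinSuccEquivOption (σ : Type*) (n : ℕ) : σ ⊕ Fin (n + 1) ≃ Option (σ ⊕ Fin n) :=
  (Equiv.sumCongr (.refl σ) ((finSuccEquiv n).trans (Equiv.optionEquivSumPUnit.{0} _))).trans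
    ((Equiv.sumAssoc _ _ _).symm.trans (Equiv.optionEquivSumPUnit _).symm)

@[simp]
theorem sumFinSuccEquivOption_inl {σ : Type*} {n : ℕ} (j : σ) :
    sumFinSuccEquivOption σ n (.inl j) = some (.inl j) := by
  simp [sumFinSuccEquivOption]

@[simp]
theorem sumFinSuccEquivOption_inr_zero {σ : Type*} {n : ℕ} :
    sumFinSuccEquivOption σ n (.inr 0) = none := by
  simp [sumFinSuccEquivOption]

theorem sumFinSuccEquivOption_comp_map_succ {σ : Type*} {n : ℕ} :
    sumFinSuccEquivOption σ n ∘ Sum.map id Fin.succ = some := by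
  ext1 (j | i) <;> simp [sumFinSuccEquivOption]

namespace MvPolynomial

variable {R σ : Type*}

theorem optionEquivLeft_rename_some [CommSemiring R] (p : MvPolynomial σ R) :
    optionEquivLeft R σ (rename some p) = Polynomial.C p := by
  induction p using MvPolynomial.induction_on with
  | C a => simp [optionEquivLeft_C]
  | add p q hp hq => simp [hp, hq]
  | mul_X p i hp => simp [hp, optionEquivLeft_X_some]

variable [CommRing R] [IsDomain R] [UniqueFactorizationMonoid R]

theorem isRelPrime_prod_X_pow_of_not_dvd {ι : Type*} (s : Finset ι) (v : ι → σ) (r : ι → ℕ)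
    {g : MvPolynomial σ R} (hg : ∀ i ∈ s, ¬ X (v i) ∣ g) : IsRelPrime (∏ i ∈ s, X (v i) ^ r i) g :=
  IsRelPrime.prod_left fun i hi ↦ (X_prime.irreducible.isRelPrime_iff_not_dvd.2 (hg i hi)).pow_left

theorem prime_rename_some_mul_X_none_sub {c g : MvPolynomial σ R} (hc : c ≠ 0)
    (hcg : IsRelPrime c g) :
    Prime (rename some c * X none - rename some g : MvPolynomial (Option σ) R) := by
  rw [← MulEquiv.prime_iff (optionEquivLeft R σ), ← UniqueFactorizationMonoid.irreducible_iff_prime]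
  simpa [optionEquivLeft_rename_some, optionEquivLeft_X_none, sub_eq_add_neg] using
    Polynomial.irreducible_C_mul_X_add_C hc hcg.neg_right

theorem prime_prod_X_pow_mul_X_sub_rename [Fintype σ] {n : ℕ} (r : σ → ℕ)
    {G : MvPolynomial (σ ⊕ Fin n) R} (hG : ∀ j, ¬ X (Sum.inl j) ∣ G) :
    Prime ((∏ j, X (Sum.inl j) ^ r j) * X (Sum.inr 0) - rename (Sum.map id Fin.succ) G :
      MvPolynomial (σ ⊕ Fin (n + 1)) R) := by
  set c : MvPolynomial (σ ⊕ Fin n) R := ∏ j, X (Sum.inl j) ^ r j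
  have hc : c ≠ 0 := Finset.prod_ne_zero_iff.2 fun j _ ↦ pow_ne_zero _ (X_ne_zero _)
  have hcG : IsRelPrime c G := isRelPrime_prod_X_pow_of_not_dvd _ _ r fun j _ ↦ hG j
  rw [← MulEquiv.prime_iff (renameEquiv R (sumFinSuccEquivOption σ n))]
  convert prime_rename_some_mul_X_none_sub hc hcG using 1
  simp [c, map_prod, rename_rename, sumFinSuccEquivOption_comp_map_succ]

end MvPolynomial

open MvPolynomial in
/-- `Sum.inr 0, Sum.inr 1, Sum.inr 2` are `Y, Z, T`, and `G` is written in `Z = Sum.inr 0`,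
`T = Sum.inr 1`. -/
theorem asanuma_ring_isDomain_general
    {k : Type*} [Field k] (m : ℕ) (r : Fin m → ℕ)
    (G : MvPolynomial (Fin m ⊕ Fin 2) k)
    (hdvd : ∀ j : Fin m, ¬ (X (Sum.inl j) : MvPolynomial (Fin m ⊕ Fin 2) k) ∣ G) :
    IsDomain (MvPolynomial (Fin m ⊕ Fin 3) k ⧸
      Ideal.span {(∏ j : Fin m, X (Sum.inl j) ^ r j) * X (Sum.inr 0)
        - rename (Sum.map id Fin.succ) G}) :=
  have hprime := prime_prod_X_pow_mul_X_sub_rename r hdvd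
  have := (Ideal.span_singleton_prime hprime.ne_zero).2 hprime
  Ideal.Quotient.isDomain _

open MvPolynomial in
/-- If `G ∈ k[X₁,…,X_m,Z,T]` is nonzero and not divisible by any `X_j`, then
`D = k[X₁,…,X_m,Y,Z,T]/(X₁^{r₁}⋯X_m^{r_m}Y − G)` is an integral domain.
Here `Sum.inr 0 = Y`, `Sum.inr 1 = Z`, `Sum.inr 2 = T`. -/
theorem asanuma_ring_isDomain
    {k : Type*} [Field k] (m : ℕ) (r : Fin m → ℕ) (hr : ∀ j, 1 < r j)
    (G : MvPolynomial (Fin m ⊕ Fin 2) k) (hG : G ≠ 0)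
    (hdvd : ∀ j : Fin m, ¬ (X (Sum.inl j) : MvPolynomial (Fin m ⊕ Fin 2) k) ∣ G) :
    IsDomain (MvPolynomial (Fin m ⊕ Fin 3) k ⧸
      Ideal.span {(∏ j : Fin m, X (Sum.inl j) ^ r j) * X (Sum.inr 0)
        - rename (Sum.map id Fin.succ) G}) :=
  asanuma_ring_isDomain_general m r G hdvd
end

section
/- Let A be an affine domain over a field k equipped with an admissible proper ℤ-filtration {A_n}, and let gr(A) = ⊕_n A_n/A_{n−1} be the associated graded domain. If φ is a non-trivial exponential map on A, then φ induces a non-trivial homogeneous exponential map φ̄ on gr(A) such that the image under the leading-form map ρ of A^φ is contained in gr(A)^{φ̄}. -/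
/-- `(𝒜, ρ)` realizes the `k`-algebra `G` as the associated graded ring of the
filtration `F` on `A`: `ρ n : F n → G` is the leading-form map onto the `n`-th
graded piece `𝒜 n`, with kernel `F (n-1)`, compatible with multiplication and
sending `1` to `1`. -/
structure IsAssociatedGraded {k A G : Type*} [CommRing k] [CommRing A] [Algebra k A]
    [CommRing G] [Algebra k G] (F : ℤ → Submodule k A) (𝒜 : ℤ → Submodule k G)
    (ρ : ∀ n : ℤ, F n →ₗ[k] G) : Prop where
  mem_piece : ∀ (n : ℤ) (a : F n), ρ n a ∈ 𝒜 n
  surjective : ∀ (n : ℤ), ∀ g ∈ 𝒜 n, ∃ a : F n, ρ n a = g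
  ker : ∀ (n : ℤ) (a : F n), ρ n a = 0 ↔ (a : A) ∈ F (n - 1)
  map_mul : ∀ (p q : ℤ) (a : F p) (b : F q) (h : (a : A) * (b : A) ∈ F (p + q)),
    ρ (p + q) ⟨(a : A) * (b : A), h⟩ = ρ p a * ρ q b
  map_one : ∀ h : (1 : A) ∈ F 0, ρ 0 ⟨1, h⟩ = 1

/-- The filtration `F` is a proper (exhaustive and separated) ℤ-filtration of the
`k`-algebra `A` by `k`-submodules. -/
structure IsProperFiltration {k A : Type*} [CommRing k] [CommRing A] [Algebra k A]
    (F : ℤ → Submodule k A) : Prop where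
  mono : Monotone F
  one_mem : (1 : A) ∈ F 0
  mul_mem : ∀ {p q : ℤ} {a b : A}, a ∈ F p → b ∈ F q → a * b ∈ F (p + q)
  exhaustive : ∀ a : A, ∃ n, a ∈ F n
  separated : ∀ a : A, (∀ n, a ∈ F n) → a = 0

/-- The filtration `F` is admissible: there is a finite generating set `s` of `A`
such that every element of `F n` is a polynomial in `s` all of whose monomials lie
in `F n`. -/
def IsAdmissibleFiltration {k A : Type*} [CommRing k] [CommRing A] [Algebra k A]
    (F : ℤ → Submodule k A) : Prop :=
  ∃ s : Finset A, Algebra.adjoin k (s : Set A) = ⊤ ∧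
    ∀ (n : ℤ), ∀ a ∈ F n, ∃ p : MvPolynomial (s : Set A) k,
      MvPolynomial.aeval (R := k) (fun i : (s : Set A) => (i : A)) p = a ∧
      ∀ d ∈ p.support, (d.prod fun i e => (i : A) ^ e) ∈ F n

/-!
Let `r = e / q` (in lowest terms) be the largest slope `(deg (φ g)ᵢ - deg g) / i` over the
generators `g` of `A`. Admissibility, together with additivity of degrees in the domain `G`,
propagates the bound `deg (φ a)ᵢ ≤ deg a + ⌊r i⌋` from the generators to all of `A`: `φ` is
filtered when `U` gets degree `r`. The associated graded map sends `ρ a` to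
`∑ₘ ρ((φ a)_{m q}) Uᵐ`; coefficients away from multiples of `q` drop out of products because
`⌊r u⌋ + ⌊r v⌋ < r (u + v)` when `q ∤ u` and `q ∣ u + v`. This is a homogeneous algebra map, and
it is non-trivial because the slope is attained. The coaction identity survives since, at the
extremal coefficient `(φ g₀)_N`, it forces `N.choose j = 0` in `k` whenever `q ∤ j`; hence `q` is
`1` or a power of the characteristic, and `(a q).choose (b q) = a.choose b` by Lucas' theorem.
-/

/-- Junk value `0` at `a = 0`, where `{n | a ∈ F n}` is not bounded below. -/
noncomputable def filtrationDegree {k A : Type*} [CommRing k] [CommRing A] [Algebra k A]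
    (F : ℤ → Submodule k A) (a : A) : ℤ :=
  sInf {n | a ∈ F n}

namespace IsProperFiltration

variable {k A : Type*} [CommRing k] [CommRing A] [Algebra k A] {F : ℤ → Submodule k A}
  (hF : IsProperFiltration F)
include hF

theorem bddBelow_setOf_mem {a : A} (ha : a ≠ 0) : BddBelow {n | a ∈ F n} := by
  by_contra h
  refine ha (hF.separated a fun m => ?_)
  obtain ⟨n, hn, hnm⟩ := not_bddBelow_iff.mp h m
  exact hF.mono hnm.le hn

theorem mem_iff_filtrationDegree_le {a : A} (ha : a ≠ 0) {m : ℤ} :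
    a ∈ F m ↔ filtrationDegree F a ≤ m := by
  refine ⟨fun h => csInf_le (hF.bddBelow_setOf_mem ha) h, fun h => hF.mono h ?_⟩
  obtain ⟨n, hn⟩ := hF.exhaustive a
  exact Int.csInf_mem ⟨n, hn⟩ (hF.bddBelow_setOf_mem ha)

theorem mem_filtrationDegree {a : A} (ha : a ≠ 0) : a ∈ F (filtrationDegree F a) :=
  (hF.mem_iff_filtrationDegree_le ha).2 le_rfl

theorem notMem_filtrationDegree_sub_one {a : A} (ha : a ≠ 0) :
    a ∉ F (filtrationDegree F a - 1) := by
  rw [hF.mem_iff_filtrationDegree_le ha]; omega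

end IsProperFiltration

open Classical in
noncomputable def leadingForm {k A G : Type*} [CommRing k] [CommRing A] [Algebra k A]
    [CommRing G] [Algebra k G] {F : ℤ → Submodule k A} (ρ : ∀ n : ℤ, F n →ₗ[k] G) (n : ℤ)
    (a : A) : G :=
  if h : a ∈ F n then ρ n ⟨a, h⟩ else 0

section leadingForm

variable {k A G : Type*} [CommRing k] [CommRing A] [Algebra k A] [CommRing G] [Algebra k G]
  {F : ℤ → Submodule k A} {ρ : ∀ n : ℤ, F n →ₗ[k] G}

theorem leadingForm_of_mem {n : ℤ} {a : A} (h : a ∈ F n) : leadingForm ρ n a = ρ n ⟨a, h⟩ :=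
  dif_pos h

@[simp]
theorem leadingForm_zero (n : ℤ) : leadingForm ρ n (0 : A) = 0 := by
  rw [leadingForm_of_mem (zero_mem _)]
  exact map_zero (ρ n)

theorem leadingForm_add {n : ℤ} {a b : A} (ha : a ∈ F n) (hb : b ∈ F n) :
    leadingForm ρ n (a + b) = leadingForm ρ n a + leadingForm ρ n b := by
  rw [leadingForm_of_mem ha, leadingForm_of_mem hb, leadingForm_of_mem (add_mem ha hb),
    ← map_add]
  rfl

theorem leadingForm_smul {n : ℤ} (c : k) {a : A} (ha : a ∈ F n) :
    leadingForm ρ n (c • a) = c • leadingForm ρ n a := by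
  rw [leadingForm_of_mem ha, leadingForm_of_mem (Submodule.smul_mem _ c ha), ← map_smul]
  rfl

theorem leadingForm_nsmul {n : ℤ} (m : ℕ) {a : A} (ha : a ∈ F n) :
    leadingForm ρ n (m • a) = m • leadingForm ρ n a := by
  rw [leadingForm_of_mem ha, leadingForm_of_mem (nsmul_mem ha m), ← map_nsmul]
  rfl

theorem leadingForm_sum {ι : Type*} {s : Finset ι} {n : ℤ} {f : ι → A}
    (hf : ∀ i ∈ s, f i ∈ F n) :
    leadingForm ρ n (∑ i ∈ s, f i) = ∑ i ∈ s, leadingForm ρ n (f i) := by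
  classical
  induction s using Finset.induction_on with
  | empty => simp
  | insert j s hj ih =>
    rw [Finset.sum_insert hj, Finset.sum_insert hj,
      leadingForm_add (hf j (Finset.mem_insert_self j s))
        (Submodule.sum_mem _ fun i hi => hf i (Finset.mem_insert_of_mem hi)),
      ih fun i hi => hf i (Finset.mem_insert_of_mem hi)]

end leadingForm

namespace IsAssociatedGraded

variable {k A G : Type*} [CommRing k] [CommRing A] [Algebra k A] [CommRing G] [Algebra k G]
  {F : ℤ → Submodule k A} {𝒜 : ℤ → Submodule k G} {ρ : ∀ n : ℤ, F n →ₗ[k] G}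
  (hgr : IsAssociatedGraded F 𝒜 ρ)
include hgr

theorem leadingForm_mem (n : ℤ) (a : A) : leadingForm ρ n a ∈ 𝒜 n := by
  by_cases h : a ∈ F n
  · rw [leadingForm_of_mem h]; exact hgr.mem_piece n _
  · rw [leadingForm, dif_neg h]; exact zero_mem _

theorem surjective_codRestrict (n : ℤ) :
    Function.Surjective ((ρ n).codRestrict (𝒜 n) (hgr.mem_piece n)) := fun g => by
  obtain ⟨a, ha⟩ := hgr.surjective n g g.2
  exact ⟨a, Subtype.ext ha⟩

theorem exists_leadingForm_eq {n : ℤ} {g : G} (hg : g ∈ 𝒜 n) :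
    ∃ a ∈ F n, leadingForm ρ n a = g := by
  obtain ⟨a, rfl⟩ := hgr.surjective n g hg
  exact ⟨a, a.2, leadingForm_of_mem a.2⟩

theorem leadingForm_eq_zero_iff {n : ℤ} {a : A} (ha : a ∈ F n) :
    leadingForm ρ n a = 0 ↔ a ∈ F (n - 1) := by
  rw [leadingForm_of_mem ha]; exact hgr.ker n ⟨a, ha⟩

theorem induction_on [DirectSum.Decomposition 𝒜] {motive : G → Prop} (zero : motive 0)
    (leadingForm : ∀ n, ∀ a ∈ F n, motive (leadingForm ρ n a))
    (add : ∀ x y, motive x → motive y → motive (x + y)) (x : G) : motive x := by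
  induction x using DirectSum.Decomposition.inductionOn 𝒜 with
  | zero => exact zero
  | homogeneous g =>
    obtain ⟨a, ha, hag⟩ := hgr.exists_leadingForm_eq g.2
    exact hag ▸ leadingForm _ a ha
  | add x y hx hy => exact add x y hx hy

variable (hF : IsProperFiltration F)
include hF

theorem leadingForm_eq_zero_of_mem_sub_one {n : ℤ} {a : A} (ha : a ∈ F (n - 1)) :
    leadingForm ρ n a = 0 :=
  (hgr.leadingForm_eq_zero_iff (hF.mono (by omega) ha)).2 ha

theorem leadingForm_add_of_mem_sub_one {n : ℤ} {a b : A} (ha : a ∈ F n) (hb : b ∈ F (n - 1)) :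
    leadingForm ρ n (a + b) = leadingForm ρ n a := by
  rw [leadingForm_add ha (hF.mono (by omega) hb), hgr.leadingForm_eq_zero_of_mem_sub_one hF hb,
    add_zero]

theorem leadingForm_mul {p q : ℤ} {a b : A} (ha : a ∈ F p) (hb : b ∈ F q) :
    leadingForm ρ (p + q) (a * b) = leadingForm ρ p a * leadingForm ρ q b := by
  rw [leadingForm_of_mem ha, leadingForm_of_mem hb, leadingForm_of_mem (hF.mul_mem ha hb)]
  exact hgr.map_mul p q ⟨a, ha⟩ ⟨b, hb⟩ _

theorem leadingForm_one : leadingForm ρ 0 (1 : A) = 1 := by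
  rw [leadingForm_of_mem hF.one_mem]; exact hgr.map_one _

theorem leadingForm_ne_zero {a : A} (ha : a ≠ 0) :
    leadingForm ρ (filtrationDegree F a) a ≠ 0 := by
  rw [Ne, hgr.leadingForm_eq_zero_iff (hF.mem_filtrationDegree ha)]
  exact hF.notMem_filtrationDegree_sub_one ha

theorem filtrationDegree_add_le_of_mul_mem [NoZeroDivisors G] {a b : A} (ha : a ≠ 0)
    (hb : b ≠ 0) {p : ℤ} (hab : a * b ∈ F p) :
    filtrationDegree F a + filtrationDegree F b ≤ p := by
  by_contra! hlt
  have hmul := hgr.leadingForm_mul hF (hF.mem_filtrationDegree ha) (hF.mem_filtrationDegree hb)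
  rw [hgr.leadingForm_eq_zero_of_mem_sub_one hF (hF.mono (by omega) hab)] at hmul
  exact mul_ne_zero (hgr.leadingForm_ne_zero hF ha) (hgr.leadingForm_ne_zero hF hb) hmul.symm

end IsAssociatedGraded

namespace Rat

theorem mul_natCast_mul_den (r : ℚ) (m : ℕ) : r * ((m * r.den : ℕ) : ℚ) = (m * r.num : ℤ) := by
  push_cast
  rw [mul_left_comm, mul_den_eq_num]

theorem floor_mul_natCast_mul_den (r : ℚ) (m : ℕ) : ⌊r * ((m * r.den : ℕ) : ℚ)⌋ = m * r.num := by
  rw [mul_natCast_mul_den, Int.floor_intCast]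

theorem den_dvd_of_mul_eq_intCast (r : ℚ) {u : ℕ} {z : ℤ} (h : r * u = z) : r.den ∣ u := by
  have hz : (r.num * u : ℚ) = z * r.den := by
    rw [← mul_den_eq_num, mul_right_comm, h]
  have : (r.den : ℤ) ∣ r.num * u := ⟨z, by rw [mul_comm _ z]; exact_mod_cast hz⟩
  exact Int.natCast_dvd_natCast.mp (r.isCoprime_num_den.symm.dvd_of_dvd_mul_left this)

theorem floor_mul_add_floor_mul_lt (r : ℚ) {u v : ℕ} (hu : ¬ r.den ∣ u)
    (huv : r.den ∣ u + v) : ⌊r * u⌋ + ⌊r * v⌋ < ⌊r * ↑(u + v)⌋ := by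
  obtain ⟨m, hm⟩ := huv
  have hlt : (⌊r * u⌋ : ℚ) < r * u :=
    Int.floor_lt_self_iff.mpr fun ⟨z, hz⟩ => hu (r.den_dvd_of_mul_eq_intCast hz.symm)
  have hexact := r.mul_natCast_mul_den m
  rw [mul_comm m, ← hm] at hexact
  push_cast at hexact
  have hsum : (⌊r * u⌋ + ⌊r * v⌋ : ℚ) < m * r.num := by linarith [Int.floor_le (r * v)]
  rw [hm, mul_comm r.den, floor_mul_natCast_mul_den]
  exact_mod_cast hsum

end Rat

/-- The hypothesis forces `q` to be `1` or a power of the characteristic, and Lucas' theorem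
applies. -/
theorem choose_mul_eq_choose_of_choose_eq_zero {K : Type*} [CommRing K] [IsDomain K] {q N : ℕ}
    (hN : N ≠ 0) (h : ∀ j, ¬ q ∣ j → (N.choose j : K) = 0) (a b : ℕ) :
    ((a * q).choose (b * q) : K) = a.choose b := by
  rcases CharP.char_is_prime_or_zero K (ringChar K) with hp | hchar
  · have := Fact.mk hp
    have := ringChar.charP K
    set p := ringChar K
    have hlucas : ∀ s x y : ℕ, ((p ^ s * x).choose (p ^ s * y) : K) = x.choose y := fun _ _ _ => by
      exact_mod_cast (CharP.intCast_eq_intCast K p).mpr Choose.choose_pow_mul_pow_mul_modEq_choose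
    have hq : q ∣ p ^ N.factorization p := by
      by_contra hq
      apply Nat.not_dvd_ordCompl hp hN
      rw [← CharP.cast_eq_zero_iff K p, ← h _ hq, ← Nat.choose_one_right (N / _), ← hlucas,
        mul_one, Nat.ordProj_mul_ordCompl_eq_self]
    obtain ⟨s, -, rfl⟩ := (Nat.dvd_prime_pow hp).mp hq
    rw [mul_comm a, mul_comm b, hlucas]
  · have : CharP K 0 := hchar ▸ ringChar.charP K
    have := CharP.charP_to_charZero K
    have hq : q ∣ 1 := by
      by_contra hq
      exact hN (by exact_mod_cast (Nat.choose_one_right N) ▸ h 1 hq)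
    rw [Nat.dvd_one.mp hq, mul_one, mul_one]

open Polynomial

theorem Polynomial.coeff_coeff_eval₂_X_add_C_X {R : Type*} [CommRing R] (p : R[X]) (j m : ℕ) :
    ((p.eval₂ ((C : R[X] →+* Polynomial R[X]).comp C) (X + C X)).coeff j).coeff m =
      (j + m).choose j • p.coeff (j + m) := by
  induction p using Polynomial.induction_on' with
  | add p q hp hq => rw [eval₂_add, coeff_add, coeff_add, hp, hq, coeff_add, smul_add]
  | monomial i a =>
    rw [eval₂_monomial, RingHom.comp_apply, coeff_C_mul, coeff_X_add_C_pow, coeff_C_mul,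
      coeff_mul_natCast, coeff_X_pow, coeff_monomial]
    by_cases hij : i = j + m
    · subst hij
      rw [if_pos (by omega), if_pos rfl, nsmul_eq_mul]
      ring
    · rw [if_neg hij, smul_zero]
      by_cases hji : j ≤ i
      · rw [if_neg (by omega), zero_mul, mul_zero]
      · rw [Nat.choose_eq_zero_of_lt (by omega), Nat.cast_zero, mul_zero, mul_zero]

theorem coaction_iff_coeff {k B : Type*} [CommSemiring k] [CommRing B] [Algebra k B]
    (ψ : B →ₐ[k] B[X]) (b : B) :
    (ψ b).map ψ.toRingHom = (ψ b).eval₂ (C.comp (C : B →+* B[X])) (X + C X) ↔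
      ∀ j m : ℕ, (ψ ((ψ b).coeff j)).coeff m = (j + m).choose j • (ψ b).coeff (j + m) := by
  simp only [Polynomial.ext_iff, coeff_map, coeff_coeff_eval₂_X_add_C_X]
  rfl

theorem IsExpMap.coeff_coeff {k B : Type*} [CommSemiring k] [CommRing B] [Algebra k B]
    {φ : B →ₐ[k] B[X]} (hφ : IsExpMap φ) (b : B) (j m : ℕ) :
    (φ ((φ b).coeff j)).coeff m = (j + m).choose j • (φ b).coeff (j + m) :=
  (coaction_iff_coeff φ b).mp (hφ.2 b) j m

theorem IsExpMap.eq_C_iff {k A : Type*} [CommSemiring k] [CommRing A] [Algebra k A]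
    {φ : A →ₐ[k] A[X]} (hφ : IsExpMap φ) (a : A) :
    φ a = C a ↔ ∀ i ≠ 0, (φ a).coeff i = 0 := by
  refine ⟨fun h i hi => by rw [h, coeff_C, if_neg hi], fun h => ext fun i => ?_⟩
  rcases eq_or_ne i 0 with rfl | hi
  · rw [coeff_zero_eq_eval_zero, hφ.1, coeff_C_zero]
  · rw [h i hi, coeff_C, if_neg hi]

theorem IsExpMap.exists_coeff_ne_zero_of_adjoin_eq_top {k A : Type*} [CommSemiring k]
    [CommRing A] [Algebra k A] {φ : A →ₐ[k] A[X]} (hφ : IsExpMap φ) {s : Set A}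
    (hs : Algebra.adjoin k s = ⊤) (hnt : ∃ b, φ b ≠ C b) :
    ∃ g ∈ s, ∃ i ≠ 0, (φ g).coeff i ≠ 0 := by
  by_contra! h
  obtain ⟨b, hb⟩ := hnt
  have hle : Algebra.adjoin k s ≤ AlgHom.equalizer φ (CAlgHom (R := k)) :=
    Algebra.adjoin_le fun g hg => (hφ.eq_C_iff g).mpr (h g hg)
  exact hb (hle (hs ▸ Algebra.mem_top))

/-- The `n`-th piece of the filtration of `A[U]` in which `U` has degree `r`. -/
def weightedPiece {k A : Type*} [CommRing k] [CommRing A] [Algebra k A]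
    (F : ℤ → Submodule k A) (r : ℚ) (n : ℤ) : Submodule k A[X] where
  carrier := {P | ∀ i : ℕ, P.coeff i ∈ F (n + ⌊r * i⌋)}
  add_mem' hP hQ i := by rw [coeff_add]; exact add_mem (hP i) (hQ i)
  zero_mem' i := by rw [coeff_zero]; exact zero_mem _
  smul_mem' c P hP i := by rw [coeff_smul]; exact Submodule.smul_mem _ c (hP i)

section weightedPiece

variable {k A : Type*} [CommRing k] [CommRing A] [Algebra k A] {F : ℤ → Submodule k A} {r : ℚ}

theorem coeff_mul_den_mem_of_mem_weightedPiece {n : ℤ} {P : A[X]}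
    (hP : P ∈ weightedPiece F r n) (m : ℕ) : P.coeff (m * r.den) ∈ F (n + m * r.num) := by
  simpa only [Rat.floor_mul_natCast_mul_den] using hP (m * r.den)

theorem C_mem_weightedPiece {n : ℤ} {a : A} (ha : a ∈ F n) : C a ∈ weightedPiece F r n := by
  intro i
  rcases i with _ | i
  · simpa using ha
  · rw [coeff_C_succ]; exact zero_mem _

variable (hF : IsProperFiltration F)
include hF

theorem IsProperFiltration.weightedPiece_mono {n n' : ℤ} (h : n ≤ n') :
    weightedPiece F r n ≤ weightedPiece F r n' :=
  fun _ hP i => hF.mono (by omega) (hP i)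

theorem IsProperFiltration.mul_mem_weightedPiece {n m : ℤ} {P Q : A[X]}
    (hP : P ∈ weightedPiece F r n) (hQ : Q ∈ weightedPiece F r m) :
    P * Q ∈ weightedPiece F r (n + m) := by
  intro i
  rw [coeff_mul]
  refine Submodule.sum_mem _ fun x hx => hF.mono ?_ (hF.mul_mem (hP x.1) (hQ x.2))
  have := Int.le_floor_add (r * x.1) (r * x.2)
  rw [← mul_add, ← Nat.cast_add, Finset.HasAntidiagonal.mem_antidiagonal.mp hx] at this
  omega

end weightedPiece

/-- The image of `P ∈ weightedPiece F r n` in the associated graded ring, identified with `G[U]`;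
it only sees the coefficients of `P` at multiples of `r.den` (compare `Polynomial.contract`). -/
noncomputable def weightedLeadingForm {k A G : Type*} [CommRing k] [CommRing A] [Algebra k A]
    [CommRing G] [Algebra k G] {F : ℤ → Submodule k A} (ρ : ∀ n : ℤ, F n →ₗ[k] G) (r : ℚ)
    (n : ℤ) (P : A[X]) : G[X] :=
  ∑ m ∈ Finset.range (P.natDegree + 1),
    monomial m (leadingForm ρ (n + m * r.num) (P.coeff (m * r.den)))

section weightedLeadingForm

variable {k A G : Type*} [CommRing k] [CommRing A] [Algebra k A] [CommRing G] [Algebra k G]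
  {F : ℤ → Submodule k A} {ρ : ∀ n : ℤ, F n →ₗ[k] G} {r : ℚ}

theorem coeff_weightedLeadingForm (n : ℤ) (P : A[X]) (m : ℕ) :
    (weightedLeadingForm ρ r n P).coeff m =
      leadingForm ρ (n + m * r.num) (P.coeff (m * r.den)) := by
  simp only [weightedLeadingForm, finsetSum_coeff, coeff_monomial, Finset.sum_ite_eq',
    Finset.mem_range, ite_eq_left_iff, not_lt]
  intro hm
  rw [coeff_eq_zero_of_natDegree_lt (by nlinarith [r.den_pos]), leadingForm_zero]

theorem weightedLeadingForm_C (n : ℤ) (a : A) :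
    weightedLeadingForm ρ r n (C a) = C (leadingForm ρ n a) := by
  ext m
  rw [coeff_weightedLeadingForm]
  rcases m with _ | m
  · simp
  · rw [coeff_C_succ, coeff_C, if_neg (mul_ne_zero (Nat.succ_ne_zero m) r.den_nz),
      leadingForm_zero]

theorem weightedLeadingForm_add {n : ℤ} {P Q : A[X]} (hP : P ∈ weightedPiece F r n)
    (hQ : Q ∈ weightedPiece F r n) :
    weightedLeadingForm ρ r n (P + Q) =
      weightedLeadingForm ρ r n P + weightedLeadingForm ρ r n Q := by
  ext m
  simp only [coeff_add, coeff_weightedLeadingForm]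
  exact leadingForm_add (coeff_mul_den_mem_of_mem_weightedPiece hP m)
    (coeff_mul_den_mem_of_mem_weightedPiece hQ m)

theorem weightedLeadingForm_smul {n : ℤ} (c : k) {P : A[X]} (hP : P ∈ weightedPiece F r n) :
    weightedLeadingForm ρ r n (c • P) = c • weightedLeadingForm ρ r n P := by
  ext m
  simp only [coeff_smul, coeff_weightedLeadingForm]
  exact leadingForm_smul c (coeff_mul_den_mem_of_mem_weightedPiece hP m)

variable {𝒜 : ℤ → Submodule k G} (hgr : IsAssociatedGraded F 𝒜 ρ)
include hgr

theorem IsAssociatedGraded.coeff_weightedLeadingForm_mem (n : ℤ) (P : A[X]) (m : ℕ) :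
    (weightedLeadingForm ρ r n P).coeff m ∈ 𝒜 (n + m * r.num) := by
  rw [coeff_weightedLeadingForm]; exact hgr.leadingForm_mem _ _

variable (hF : IsProperFiltration F)
include hF

theorem IsAssociatedGraded.weightedLeadingForm_eq_zero {n : ℤ} {P : A[X]}
    (hP : P ∈ weightedPiece F r (n - 1)) : weightedLeadingForm ρ r n P = 0 := by
  ext m
  rw [coeff_weightedLeadingForm, coeff_zero]
  refine hgr.leadingForm_eq_zero_of_mem_sub_one hF ?_
  simpa only [sub_add_eq_add_sub] using coeff_mul_den_mem_of_mem_weightedPiece hP m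

omit hgr in
/-- Products of coefficients away from multiples of `r.den` drop one filtration step, by the
strict inequality between floors. -/
theorem IsProperFiltration.coeff_mul_sub_mem {n₁ n₂ : ℤ} {P Q : A[X]}
    (hP : P ∈ weightedPiece F r n₁) (hQ : Q ∈ weightedPiece F r n₂) (i : ℕ) :
    (P * Q).coeff (i * r.den) - (contract r.den P * contract r.den Q).coeff i ∈
      F (n₁ + n₂ + i * r.num - 1) := by
  have hq := r.den_pos
  have hexp : ∀ (R : A[X]) (u : ℕ),
      (expand A r.den (contract r.den R)).coeff u = if r.den ∣ u then R.coeff u else 0 := by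
    intro R u
    rw [coeff_expand hq]
    split_ifs with hu
    · rw [coeff_contract r.den_nz, Nat.div_mul_cancel hu]
    · rfl
  rw [← coeff_expand_mul hq (contract r.den P * contract r.den Q) i, map_mul, coeff_mul,
    coeff_mul, ← Finset.sum_sub_distrib]
  refine Submodule.sum_mem _ fun x hx => ?_
  have hsum := Finset.HasAntidiagonal.mem_antidiagonal.mp hx
  rw [hexp, hexp]
  by_cases hu : r.den ∣ x.1
  · have hv : r.den ∣ x.2 := (Nat.dvd_add_right hu).mp (hsum ▸ dvd_mul_left _ _)
    rw [if_pos hu, if_pos hv, sub_self]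
    exact zero_mem _
  · rw [if_neg hu, zero_mul, sub_zero]
    refine hF.mono ?_ (hF.mul_mem (hP x.1) (hQ x.2))
    have hlt := r.floor_mul_add_floor_mul_lt hu (hsum ▸ dvd_mul_left _ _)
    rw [hsum, Rat.floor_mul_natCast_mul_den] at hlt
    omega

theorem IsAssociatedGraded.weightedLeadingForm_mul {n₁ n₂ : ℤ} {P Q : A[X]}
    (hP : P ∈ weightedPiece F r n₁) (hQ : Q ∈ weightedPiece F r n₂) :
    weightedLeadingForm ρ r (n₁ + n₂) (P * Q) =
      weightedLeadingForm ρ r n₁ P * weightedLeadingForm ρ r n₂ Q := by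
  ext i
  have hlevel : ∀ x ∈ Finset.HasAntidiagonal.antidiagonal i,
      n₁ + n₂ + i * r.num = (n₁ + x.1 * r.num) + (n₂ + x.2 * r.num) := fun x hx => by
    rw [← Finset.HasAntidiagonal.mem_antidiagonal.mp hx]; push_cast; ring
  have hterm : ∀ x ∈ Finset.HasAntidiagonal.antidiagonal i,
      (contract r.den P).coeff x.1 * (contract r.den Q).coeff x.2 ∈ F (n₁ + n₂ + i * r.num) := by
    intro x hx
    rw [hlevel x hx, coeff_contract r.den_nz, coeff_contract r.den_nz]
    exact hF.mul_mem (coeff_mul_den_mem_of_mem_weightedPiece hP x.1)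
      (coeff_mul_den_mem_of_mem_weightedPiece hQ x.2)
  rw [coeff_weightedLeadingForm, ← add_sub_cancel ((contract r.den P * contract r.den Q).coeff i)
      ((P * Q).coeff (i * r.den)),
    hgr.leadingForm_add_of_mem_sub_one hF (by rw [coeff_mul]; exact Submodule.sum_mem _ hterm)
      (hF.coeff_mul_sub_mem hP hQ i),
    coeff_mul, coeff_mul, leadingForm_sum hterm]
  refine Finset.sum_congr rfl fun x hx => ?_
  rw [hlevel x hx, coeff_contract r.den_nz, coeff_contract r.den_nz,
    hgr.leadingForm_mul hF (coeff_mul_den_mem_of_mem_weightedPiece hP x.1)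
      (coeff_mul_den_mem_of_mem_weightedPiece hQ x.2),
    coeff_weightedLeadingForm, coeff_weightedLeadingForm]

end weightedLeadingForm

section homogenization

variable {k A G : Type*} [CommRing k] [CommRing A] [Algebra k A] [CommRing G] [Algebra k G]
  {F : ℤ → Submodule k A} {𝒜 : ℤ → Submodule k G} {ρ : ∀ n : ℤ, F n →ₗ[k] G}
  {φ : A →ₐ[k] A[X]} {r : ℚ}

variable (ρ) in
noncomputable def weightedLeadingFormComp (hφr : ∀ n, ∀ a ∈ F n, φ a ∈ weightedPiece F r n)
    (n : ℤ) : F n →ₗ[k] G[X] where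
  toFun a := weightedLeadingForm ρ r n (φ a)
  map_add' a b := by
    rw [Submodule.coe_add, map_add]; exact weightedLeadingForm_add (hφr n a a.2) (hφr n b b.2)
  map_smul' c a := by
    rw [Submodule.coe_smul, map_smul]; exact weightedLeadingForm_smul c (hφr n a a.2)

variable (hF : IsProperFiltration F) (hgr : IsAssociatedGraded F 𝒜 ρ)
  (hφr : ∀ n, ∀ a ∈ F n, φ a ∈ weightedPiece F r n)
include hF hgr hφr

/-- `weightedLeadingFormComp` factors through `ρ n : F n → 𝒜 n`, whose kernel is `F (n - 1)`. -/
noncomputable def homogenizationPiece (n : ℤ) : 𝒜 n →ₗ[k] G[X] :=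
  (LinearMap.ker ((ρ n).codRestrict (𝒜 n) (hgr.mem_piece n))).liftQ
      (weightedLeadingFormComp ρ hφr n) (fun a ha => by
        have ha' : ρ n a = 0 := congrArg Subtype.val ha
        rw [hgr.ker] at ha'
        exact LinearMap.mem_ker.mpr (hgr.weightedLeadingForm_eq_zero hF (hφr _ _ ha'))) ∘ₗ
    (LinearMap.quotKerEquivOfSurjective _ (hgr.surjective_codRestrict n)).symm.toLinearMap

theorem homogenizationPiece_apply {n : ℤ} (a : F n) :
    homogenizationPiece hF hgr hφr n ⟨ρ n a, hgr.mem_piece n a⟩ =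
      weightedLeadingForm ρ r n (φ a) := by
  have hρ : (⟨ρ n a, hgr.mem_piece n a⟩ : 𝒜 n) = (ρ n).codRestrict (𝒜 n) (hgr.mem_piece n) a := rfl
  rw [homogenizationPiece, LinearMap.comp_apply, LinearEquiv.coe_toLinearMap, hρ,
    LinearMap.quotKerEquivOfSurjective_symm_apply, Submodule.liftQ_apply]
  rfl

variable [GradedAlgebra 𝒜]

noncomputable def homogenizationLinear : G →ₗ[k] G[X] :=
  DirectSum.toModule k ℤ G[X] (homogenizationPiece hF hgr hφr) ∘ₗ
    (DirectSum.decomposeLinearEquiv 𝒜).toLinearMap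

theorem homogenizationLinear_leadingForm {n : ℤ} {a : A} (ha : a ∈ F n) :
    homogenizationLinear hF hgr hφr (leadingForm ρ n a) = weightedLeadingForm ρ r n (φ a) := by
  have hmem := hgr.leadingForm_mem n a
  have hρ : (⟨leadingForm ρ n a, hmem⟩ : 𝒜 n) = ⟨ρ n ⟨a, ha⟩, hgr.mem_piece n _⟩ :=
    Subtype.ext (leadingForm_of_mem ha)
  rw [homogenizationLinear, LinearMap.comp_apply, LinearEquiv.coe_toLinearMap,
    DirectSum.decomposeLinearEquiv_apply, DirectSum.decompose_of_mem 𝒜 hmem,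
    ← DirectSum.lof_eq_of k, DirectSum.toModule_lof, hρ, homogenizationPiece_apply]

theorem homogenizationLinear_one : homogenizationLinear hF hgr hφr 1 = 1 := by
  rw [← hgr.leadingForm_one hF, homogenizationLinear_leadingForm hF hgr hφr hF.one_mem, map_one,
    ← C_1, weightedLeadingForm_C, hgr.leadingForm_one hF, C_1]

theorem homogenizationLinear_mul (x y : G) :
    homogenizationLinear hF hgr hφr (x * y) =
      homogenizationLinear hF hgr hφr x * homogenizationLinear hF hgr hφr y := by
  induction x using hgr.induction_on with
  | zero => rw [zero_mul, map_zero, zero_mul]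
  | add x x' hx hx' => rw [add_mul, map_add, hx, hx', map_add, add_mul]
  | leadingForm n a ha =>
    induction y using hgr.induction_on with
    | zero => rw [mul_zero, map_zero, mul_zero]
    | add y y' hy hy' => rw [mul_add, map_add, hy, hy', map_add, mul_add]
    | leadingForm m b hb =>
      rw [← hgr.leadingForm_mul hF ha hb, homogenizationLinear_leadingForm hF hgr hφr ha,
        homogenizationLinear_leadingForm hF hgr hφr hb,
        homogenizationLinear_leadingForm hF hgr hφr (hF.mul_mem ha hb), map_mul,
        hgr.weightedLeadingForm_mul hF (hφr n a ha) (hφr m b hb)]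

noncomputable def homogenization : G →ₐ[k] G[X] :=
  AlgHom.ofLinearMap (homogenizationLinear hF hgr hφr) (homogenizationLinear_one hF hgr hφr)
    (homogenizationLinear_mul hF hgr hφr)

theorem homogenization_leadingForm {n : ℤ} {a : A} (ha : a ∈ F n) :
    homogenization hF hgr hφr (leadingForm ρ n a) = weightedLeadingForm ρ r n (φ a) :=
  homogenizationLinear_leadingForm hF hgr hφr ha

theorem coeff_homogenization_mem {n : ℤ} {g : G} (hg : g ∈ 𝒜 n) (i : ℕ) :
    (homogenization hF hgr hφr g).coeff i ∈ 𝒜 (n + i * r.num) := by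
  obtain ⟨a, ha, rfl⟩ := hgr.exists_leadingForm_eq hg
  rw [homogenization_leadingForm hF hgr hφr ha]
  exact hgr.coeff_weightedLeadingForm_mem _ _ _

theorem homogenization_leadingForm_of_eq_C {n : ℤ} {a : A} (ha : a ∈ F n) (hφa : φ a = C a) :
    homogenization hF hgr hφr (leadingForm ρ n a) = C (leadingForm ρ n a) := by
  rw [homogenization_leadingForm hF hgr hφr ha, hφa, weightedLeadingForm_C]

theorem homogenization_leadingForm_ne_C {n : ℤ} {a : A} (ha : a ∈ F n) {m : ℕ} (hm : m ≠ 0)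
    (hcoeff : (φ a).coeff (m * r.den) ∉ F (n + m * r.num - 1)) :
    homogenization hF hgr hφr (leadingForm ρ n a) ≠ C (leadingForm ρ n a) := by
  intro h
  have hm' := congrArg (coeff · m) h
  simp only [homogenization_leadingForm hF hgr hφr ha, coeff_weightedLeadingForm, coeff_C,
    if_neg hm] at hm'
  exact hcoeff ((hgr.leadingForm_eq_zero_iff
    (coeff_mul_den_mem_of_mem_weightedPiece (hφr n a ha) m)).mp hm')

theorem eval_zero_homogenization (hφ₀ : ∀ a, (φ a).eval 0 = a) (x : G) :
    (homogenization hF hgr hφr x).eval 0 = x := by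
  induction x using hgr.induction_on with
  | zero => rw [map_zero, eval_zero]
  | add x y hx hy => rw [map_add, eval_add, hx, hy]
  | leadingForm n a ha =>
    rw [homogenization_leadingForm hF hgr hφr ha, ← coeff_zero_eq_eval_zero,
      coeff_weightedLeadingForm, zero_mul, coeff_zero_eq_eval_zero, hφ₀]
    simp

theorem isExpMap_homogenization (hφ : IsExpMap φ)
    (hchoose : ∀ a b : ℕ, ((a * r.den).choose (b * r.den) : G) = (a.choose b : G)) :
    IsExpMap (homogenization hF hgr hφr) := by
  refine ⟨eval_zero_homogenization hF hgr hφr hφ.1, fun x => ?_⟩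
  rw [coaction_iff_coeff]
  induction x using hgr.induction_on with
  | zero => simp
  | add x y hx hy => intro j m; simp only [map_add, coeff_add, hx, hy, smul_add]
  | leadingForm n a ha =>
    intro j m
    have hb := coeff_mul_den_mem_of_mem_weightedPiece (hφr n a ha) j
    have hlevel : n + j * r.num + m * r.num = n + ((j + m : ℕ) : ℤ) * r.num := by push_cast; ring
    rw [homogenization_leadingForm hF hgr hφr ha, coeff_weightedLeadingForm,
      homogenization_leadingForm hF hgr hφr hb, coeff_weightedLeadingForm,
      coeff_weightedLeadingForm, hφ.coeff_coeff, ← add_mul, hlevel,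
      leadingForm_nsmul _ (coeff_mul_den_mem_of_mem_weightedPiece (hφr n a ha) (j + m)),
      nsmul_eq_mul, nsmul_eq_mul, hchoose]

end homogenization

theorem exists_max_slope {α : Type*} {s : Finset α} {t : α → Finset ℕ} (ht : ∀ x ∈ s, 0 ∉ t x)
    (hne : ∃ x ∈ s, (t x).Nonempty) (δ : α → ℕ → ℤ) :
    ∃ r : ℚ, (∀ x ∈ s, ∀ i ∈ t x, (δ x i : ℚ) ≤ r * i) ∧
      ∃ x ∈ s, ∃ i ∈ t x, (δ x i : ℚ) = r * i := by
  obtain ⟨x, hx, i, hi⟩ := hne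
  obtain ⟨⟨x₀, i₀⟩, h₀, hmax⟩ := (s.sigma t).exists_max_image (fun p => (δ p.1 p.2 : ℚ) / p.2)
    ⟨⟨x, i⟩, Finset.mem_sigma.mpr ⟨hx, hi⟩⟩
  obtain ⟨hx₀, hi₀⟩ := Finset.mem_sigma.mp h₀
  have hpos : ∀ x ∈ s, ∀ i ∈ t x, (0 : ℚ) < i := fun x hx i hi =>
    Nat.cast_pos.mpr (Nat.pos_of_ne_zero fun h => ht x hx (h ▸ hi))
  refine ⟨δ x₀ i₀ / i₀, fun x hx i hi => ?_, x₀, hx₀, i₀, hi₀, ?_⟩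
  · have := hmax ⟨x, i⟩ (Finset.mem_sigma.mpr ⟨hx, hi⟩)
    rwa [div_le_iff₀ (hpos x hx i hi)] at this
  · rw [div_mul_cancel₀ _ (hpos x₀ hx₀ i₀ hi₀).ne']

section sharpWeight

variable {k A G : Type*} [CommRing k] [CommRing A] [Algebra k A] [CommRing G] [Algebra k G]
  {F : ℤ → Submodule k A} {𝒜 : ℤ → Submodule k G} {ρ : ∀ n : ℤ, F n →ₗ[k] G}
  {φ : A →ₐ[k] A[X]} {r : ℚ}

theorem IsProperFiltration.mem_weightedPiece_filtrationDegree (hF : IsProperFiltration F)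
    {g : A} (hg : g ≠ 0) (hg₀ : (φ g).coeff 0 = g)
    (hslope : ∀ i ≠ 0, (φ g).coeff i ≠ 0 →
      ((filtrationDegree F ((φ g).coeff i) - filtrationDegree F g : ℤ) : ℚ) ≤ r * i) :
    φ g ∈ weightedPiece F r (filtrationDegree F g) := by
  intro i
  rcases eq_or_ne i 0 with rfl | hi
  · simpa [hg₀] using hF.mem_filtrationDegree hg
  by_cases hc : (φ g).coeff i = 0
  · rw [hc]; exact zero_mem _
  rw [hF.mem_iff_filtrationDegree_le hc]
  have := Int.le_floor.mpr (hslope i hi hc)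
  omega

/-- The elements obeying the bound form a submonoid, since degrees add in the domain `G`;
admissibility then carries the bound from the generators to all of `A`. -/
theorem mem_weightedPiece_of_generators [NoZeroDivisors G]
    (hgr : IsAssociatedGraded F 𝒜 ρ) (hF : IsProperFiltration F) {s : Finset A}
    (hs : ∀ (n : ℤ), ∀ a ∈ F n, ∃ p : MvPolynomial (s : Set A) k,
      MvPolynomial.aeval (R := k) (fun i : (s : Set A) => (i : A)) p = a ∧
      ∀ d ∈ p.support, (d.prod fun i e => (i : A) ^ e) ∈ F n)
    (hgen : ∀ g ∈ s, g ≠ 0 → φ g ∈ weightedPiece F r (filtrationDegree F g)) :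
    ∀ n, ∀ a ∈ F n, φ a ∈ weightedPiece F r n := by
  classical
  let S : Submonoid A :=
    { carrier := {a | ∀ n, a ∈ F n → φ a ∈ weightedPiece F r n}
      one_mem' := fun n h1 => by rw [map_one, ← C_1]; exact C_mem_weightedPiece h1
      mul_mem' := fun {a b} ha hb n hab => by
        rcases eq_or_ne a 0 with rfl | ha0
        · rw [zero_mul, map_zero]; exact zero_mem _
        rcases eq_or_ne b 0 with rfl | hb0
        · rw [mul_zero, map_zero]; exact zero_mem _
        rw [map_mul]
        exact hF.weightedPiece_mono (hgr.filtrationDegree_add_le_of_mul_mem hF ha0 hb0 hab)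
          (hF.mul_mem_weightedPiece (ha _ (hF.mem_filtrationDegree ha0))
            (hb _ (hF.mem_filtrationDegree hb0))) }
  have hgenS : ∀ g ∈ s, g ∈ S := fun g hg n hgn => by
    rcases eq_or_ne g 0 with rfl | hg0
    · rw [map_zero]; exact zero_mem _
    exact hF.weightedPiece_mono ((hF.mem_iff_filtrationDegree_le hg0).mp hgn) (hgen g hg hg0)
  intro n a ha
  obtain ⟨p, rfl, hp⟩ := hs n a ha
  rw [p.as_sum, map_sum, map_sum]
  refine Submodule.sum_mem _ fun d hd => ?_
  rw [MvPolynomial.aeval_monomial, map_mul, AlgHom.commutes, ← Algebra.smul_def]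
  have hmono : (d.prod fun i e => (i : A) ^ e) ∈ S :=
    Submonoid.prod_mem _ fun i _ => Submonoid.pow_mem _ (hgenS i i.2) _
  exact Submodule.smul_mem _ _ (hmono n (hp d hd))

/-- Taking for `r` the largest slope of the generators, the bound holds on all of `A` and is
attained. -/
theorem exists_sharp_weight [NoZeroDivisors G] (hF : IsProperFiltration F)
    (hgr : IsAssociatedGraded F 𝒜 ρ) (hadm : IsAdmissibleFiltration F) (hφ : IsExpMap φ)
    (hnt : ∃ b, φ b ≠ C b) :
    ∃ r : ℚ, (∀ n, ∀ a ∈ F n, φ a ∈ weightedPiece F r n) ∧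
      ∃ n, ∃ a ∈ F n, ∃ m : ℕ, m ≠ 0 ∧ (φ a).coeff (m * r.den) ∉ F (n + m * r.num - 1) := by
  obtain ⟨s, hs_top, hs⟩ := hadm
  have hmem : ∀ g i, i ∈ (φ g).support.erase 0 ↔ i ≠ 0 ∧ (φ g).coeff i ≠ 0 := fun g i => by
    rw [Finset.mem_erase, mem_support_iff]
  obtain ⟨r, hle, g₀, -, i₀, hi₀, heq⟩ := exists_max_slope
    (fun _ _ => Finset.notMem_erase 0 _)
    (by
      obtain ⟨g, hg, i, hi, hc⟩ := hφ.exists_coeff_ne_zero_of_adjoin_eq_top hs_top hnt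
      exact ⟨g, hg, i, (hmem g i).mpr ⟨hi, hc⟩⟩)
    (fun g i => filtrationDegree F ((φ g).coeff i) - filtrationDegree F g)
  refine ⟨r, mem_weightedPiece_of_generators hgr hF hs fun g hg hg0 =>
    hF.mem_weightedPiece_filtrationDegree hg0 (by rw [coeff_zero_eq_eval_zero, hφ.1])
      fun i hi hc => hle g hg i ((hmem g i).mpr ⟨hi, hc⟩), ?_⟩
  obtain ⟨hi₀0, hc₀⟩ := (hmem g₀ i₀).mp hi₀
  have hg₀ : g₀ ≠ 0 := fun h => hc₀ (by rw [h, map_zero, coeff_zero])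
  obtain ⟨m, rfl⟩ := r.den_dvd_of_mul_eq_intCast heq.symm
  rw [mul_comm r.den m] at hi₀0 hc₀ heq
  rw [r.mul_natCast_mul_den, Int.cast_inj] at heq
  refine ⟨_, g₀, hF.mem_filtrationDegree hg₀, m, left_ne_zero_of_mul hi₀0, ?_⟩
  rw [← heq, add_sub_cancel]
  exact hF.notMem_filtrationDegree_sub_one hc₀

end sharpWeight

/-- By the coaction identity, `(φ (φ a)ⱼ)_{N - j} = N.choose j • (φ a)_N`, and the left side lies
one filtration step too low when `r.den ∤ j`. -/
theorem choose_eq_zero_of_sharp {k A : Type*} [Field k] [CommRing A] [Algebra k A]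
    {F : ℤ → Submodule k A} {φ : A →ₐ[k] A[X]} {r : ℚ} (hF : IsProperFiltration F) (hφ : IsExpMap φ)
    (hφr : ∀ n, ∀ a ∈ F n, φ a ∈ weightedPiece F r n) {n : ℤ} {a : A} (ha : a ∈ F n) {m : ℕ}
    (hsharp : (φ a).coeff (m * r.den) ∉ F (n + m * r.num - 1)) {j : ℕ} (hj : ¬ r.den ∣ j) :
    ((m * r.den).choose j : k) = 0 := by
  by_contra hne
  have hjN : j ≤ m * r.den := by
    by_contra h
    exact hne (by rw [Nat.choose_eq_zero_of_lt (by omega), Nat.cast_zero])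
  have hmem := hφr _ _ (hφr n a ha j) (m * r.den - j)
  rw [hφ.coeff_coeff, Nat.add_sub_cancel' hjN, ← Nat.cast_smul_eq_nsmul k,
    Submodule.smul_mem_iff _ hne] at hmem
  have hlt := r.floor_mul_add_floor_mul_lt (v := m * r.den - j) hj
    (by rw [Nat.add_sub_cancel' hjN]; exact dvd_mul_left _ _)
  rw [Nat.add_sub_cancel' hjN, Rat.floor_mul_natCast_mul_den] at hlt
  exact hsharp (hF.mono (by omega) hmem)

open Polynomial in
theorem exponential_map_homogenization_general
    {k A G : Type*} [Field k] [CommRing A] [Algebra k A]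
    [CommRing G] [IsDomain G] [Algebra k G]
    (F : ℤ → Submodule k A) (hF : IsProperFiltration F)
    (hadm : IsAdmissibleFiltration F)
    (𝒜 : ℤ → Submodule k G) [GradedAlgebra 𝒜]
    (ρ : ∀ n : ℤ, F n →ₗ[k] G) (hgr : IsAssociatedGraded F 𝒜 ρ)
    (φ : A →ₐ[k] Polynomial A) (hφ : IsExpMap φ) (hnt : ∃ b, φ b ≠ C b) :
    ∃ ψ : G →ₐ[k] Polynomial G,
      IsExpMap ψ ∧ (∃ c, ψ c ≠ C c) ∧
      (∃ d : ℤ, ∀ (n : ℤ), ∀ g ∈ 𝒜 n, ∀ i : ℕ, (ψ g).coeff i ∈ 𝒜 (n - d * i)) ∧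
      (∀ (n : ℤ) (a : F n), (a : A) ∉ F (n - 1) → φ (a : A) = C (a : A) →
        ψ (ρ n a) = C (ρ n a)) := by
  obtain ⟨r, hφr, n₀, a₀, ha₀, m, hm, hsharp⟩ := exists_sharp_weight hF hgr hadm hφ hnt
  have hchoose (a b : ℕ) : ((a * r.den).choose (b * r.den) : G) = a.choose b :=
    choose_mul_eq_choose_of_choose_eq_zero (mul_ne_zero hm r.den_nz) (fun j hj => by
      rw [← map_natCast (algebraMap k G), choose_eq_zero_of_sharp hF hφ hφr ha₀ hsharp hj,
        map_zero]) a b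
  refine ⟨homogenization hF hgr hφr, isExpMap_homogenization hF hgr hφr hφ hchoose,
    ⟨_, homogenization_leadingForm_ne_C hF hgr hφr ha₀ hm hsharp⟩,
    ⟨-r.num, fun n g hg i => ?_⟩, fun n a _ hφa => ?_⟩
  · rw [neg_mul, sub_neg_eq_add, mul_comm]
    exact coeff_homogenization_mem hF hgr hφr hg i
  · rw [← leadingForm_of_mem a.2]
    exact homogenization_leadingForm_of_eq_C hF hgr hφr a.2 hφa

open Polynomial in
/-- Derksen–Hadas–Makar-Limanov homogenization: a non-trivial exponential map `φ`
on an affine domain `A` with an admissible proper ℤ-filtration induces a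
non-trivial homogeneous exponential map `ψ` on the associated graded domain, and
the leading form of any `φ`-invariant is `ψ`-invariant. -/
theorem exponential_map_homogenization
    {k A G : Type*} [Field k] [CommRing A] [IsDomain A] [Algebra k A]
    [Algebra.FiniteType k A] [CommRing G] [IsDomain G] [Algebra k G]
    (F : ℤ → Submodule k A) (hF : IsProperFiltration F)
    (hadm : IsAdmissibleFiltration F)
    (𝒜 : ℤ → Submodule k G) [GradedAlgebra 𝒜]
    (ρ : ∀ n : ℤ, F n →ₗ[k] G) (hgr : IsAssociatedGraded F 𝒜 ρ)
    (φ : A →ₐ[k] Polynomial A) (hφ : IsExpMap φ) (hnt : ∃ b, φ b ≠ C b) :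
    ∃ ψ : G →ₐ[k] Polynomial G,
      IsExpMap ψ ∧ (∃ c, ψ c ≠ C c) ∧
      (∃ d : ℤ, ∀ (n : ℤ), ∀ g ∈ 𝒜 n, ∀ i : ℕ, (ψ g).coeff i ∈ 𝒜 (n - d * i)) ∧
      (∀ (n : ℤ) (a : F n), (a : A) ∉ F (n - 1) → φ (a : A) = C (a : A) →
        ψ (ρ n a) = C (ρ n a)) :=
  exponential_map_homogenization_general F hF hadm 𝒜 ρ hgr φ hφ hnt
end
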